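/- The rule (Weaken) is sound with respect to the concrete-instance semantics: for any !-tensor equation G = H, !-box A and !-tensor expression K such that Wk_A^K(G) and Wk_A^K(H) are well-formed, every concrete instance of the equation Wk_A^K(G) = Wk_A^K(H) is derivable from the set ⟦G = H⟧ of concrete instances of G = H using only the concrete product rule (from G' = H' infer K'·G' = K'·H') and ≡. The proof is by induction on the nesting depth of A, using that for a top-level !-box A and any n, Kill_A(Exp_A^n(Wk_A^K(G))) is obtained from Kill_A(Exp_A^n(G)) by taking the product with the n fresh copies K1,...,Kn of K. -/
import Mathlib


/-!
Shared infrastructure for !-tensor expressions (Kissinger & Quick,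
"Tensors, !-graphs, and non-commutative quantum structures").
-/

namespace BangTensor

/-- Edge names. -/
abbrev EdgeName : Type := ℕ
/-- !-box names (a set disjoint from edge names; modelled as a separate sort). -/
abbrev BoxName : Type := ℕ

/-- Directed edges: an output `â` or an input `ǎ`. -/
inductive DirEdge : Type
  | out (a : EdgeName)
  | inp (a : EdgeName)
  deriving DecidableEq

namespace DirEdge

def name : DirEdge → EdgeName
  | out a => a
  | inp a => a

def partner : DirEdge → DirEdge
  | out a => inp a
  | inp a => out a

def rename (f : EdgeName → EdgeName) : DirEdge → DirEdge
  | out a => out (f a)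
  | inp a => inp (f a)

end DirEdge

/-- A freshness function: a pair of bijections on edge names and !-box names. -/
structure Freshness : Type where
  em : EdgeName ≃ EdgeName
  bm : BoxName ≃ BoxName

/-- Edgeterms: built from the empty edgeterm, directed edges, clockwise
and anticlockwise edge groups, and concatenation. -/
inductive EdgeTerm : Type
  | eps
  | edge (d : DirEdge)
  | cw (e : EdgeTerm) (A : BoxName)
  | acw (e : EdgeTerm) (A : BoxName)
  | cat (e f : EdgeTerm)
  deriving DecidableEq

namespace EdgeTerm

/-- Number of occurrences of a directed edge in an edgeterm. -/
def count (d : DirEdge) : EdgeTerm → ℕ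
  | eps => 0
  | edge d' => if d' = d then 1 else 0
  | cw e _ => e.count d
  | acw e _ => e.count d
  | cat e f => e.count d + f.count d

/-- Edge context of a directed edge inside an edgeterm: the list of !-boxes
(edge groups) containing it, inside-out. -/
def ectx (d : DirEdge) : EdgeTerm → Option (List BoxName)
  | eps => none
  | edge d' => if d' = d then some [] else none
  | cw e A => (e.ectx d).map (· ++ [A])
  | acw e A => (e.ectx d).map (· ++ [A])
  | cat e f => (e.ectx d).orElse (fun _ => f.ectx d)

def edgeNames : EdgeTerm → Set EdgeName
  | eps => ∅
  | edge d => {d.name}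
  | cw e _ => e.edgeNames
  | acw e _ => e.edgeNames
  | cat e f => e.edgeNames ∪ f.edgeNames

def boxNames : EdgeTerm → Set BoxName
  | eps => ∅
  | edge _ => ∅
  | cw e A => insert A e.boxNames
  | acw e A => insert A e.boxNames
  | cat e f => e.boxNames ∪ f.boxNames

def rename (f : EdgeName → EdgeName) (g : BoxName → BoxName) : EdgeTerm → EdgeTerm
  | eps => eps
  | edge d => edge (d.rename f)
  | cw e A => cw (e.rename f g) (g A)
  | acw e A => acw (e.rename f g) (g A)
  | cat e f' => cat (e.rename f g) (f'.rename f g)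

/-- Rename the output edge `b̂` to `ĉ`. -/
def renameOut (b c : EdgeName) : EdgeTerm → EdgeTerm
  | eps => eps
  | edge (.out a) => edge (.out (if a = b then c else a))
  | edge (.inp a) => edge (.inp a)
  | cw e A => cw (e.renameOut b c) A
  | acw e A => acw (e.renameOut b c) A
  | cat e f => cat (e.renameOut b c) (f.renameOut b c)

/-- Rename the input edge `b̌` to `č`. -/
def renameInp (b c : EdgeName) : EdgeTerm → EdgeTerm
  | eps => eps
  | edge (.out a) => edge (.out a)
  | edge (.inp a) => edge (.inp (if a = b then c else a))
  | cw e A => cw (e.renameInp b c) A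
  | acw e A => acw (e.renameInp b c) A
  | cat e f => cat (e.renameInp b c) (f.renameInp b c)

/-- The operation `Kill_A` on edgeterms. -/
def kill (A : BoxName) : EdgeTerm → EdgeTerm
  | eps => eps
  | edge d => edge d
  | cw e B => if B = A then eps else cw (e.kill A) B
  | acw e B => if B = A then eps else acw (e.kill A) B
  | cat e f => cat (e.kill A) (f.kill A)

/-- The operation `Drop_A` on edgeterms. -/
def drop (A : BoxName) : EdgeTerm → EdgeTerm
  | eps => eps
  | edge d => edge d
  | cw e B => if B = A then e else cw (e.drop A) B
  | acw e B => if B = A then e else acw (e.drop A) B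
  | cat e f => cat (e.drop A) (f.drop A)

/-- The operation `Exp_{A,fr}` on edgeterms. -/
def exp (A : BoxName) (fr : Freshness) : EdgeTerm → EdgeTerm
  | eps => eps
  | edge d => edge d
  | cw e B => if B = A then cat (cw e B) (e.rename fr.em fr.bm) else cw (e.exp A fr) B
  | acw e B => if B = A then cat (e.rename fr.em fr.bm) (acw e B) else acw (e.exp A fr) B
  | cat e f => cat (e.exp A fr) (f.exp A fr)

/-- The operation `Copy_{A,fr}` on edgeterms. -/
def copy (A : BoxName) (fr : Freshness) : EdgeTerm → EdgeTerm
  | eps => eps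
  | edge d => edge d
  | cw e B =>
      if B = A then cat (cw e B) (cw (e.rename fr.em fr.bm) (fr.bm A)) else cw (e.copy A fr) B
  | acw e B =>
      if B = A then cat (acw (e.rename fr.em fr.bm) (fr.bm A)) (acw e B) else acw (e.copy A fr) B
  | cat e f => cat (e.copy A fr) (f.copy A fr)

/-- An edgeterm with no edge groups (a concrete edgeterm). -/
def noGroups : EdgeTerm → Prop
  | eps => True
  | edge _ => True
  | cw _ _ => False
  | acw _ _ => False
  | cat e f => e.noGroups ∧ f.noGroups

/-- Equivalence of edgeterms: associativity and unit laws for concatenation,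
and removal of empty edge groups; closed under congruence. -/
inductive Equiv : EdgeTerm → EdgeTerm → Prop
  | refl (e) : Equiv e e
  | symm {e f} : Equiv e f → Equiv f e
  | trans {e f g} : Equiv e f → Equiv f g → Equiv e g
  | cat_congr {e e' f f'} : Equiv e e' → Equiv f f' → Equiv (cat e f) (cat e' f')
  | cw_congr {e e'} (A) : Equiv e e' → Equiv (cw e A) (cw e' A)
  | acw_congr {e e'} (A) : Equiv e e' → Equiv (acw e A) (acw e' A)
  | assoc (e f g) : Equiv (cat (cat e f) g) (cat e (cat f g))
  | unit_left (e) : Equiv (cat eps e) e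
  | unit_right (e) : Equiv (cat e eps) e
  | cw_eps (A) : Equiv (cw eps A) eps
  | acw_eps (A) : Equiv (acw eps A) eps

end EdgeTerm

/-- !-pretensor expressions over a signature `σ`. -/
inductive Pretensor (σ : Type) : Type
  | unit
  | idt (a b : EdgeName)
  | gen (φ : σ) (e : EdgeTerm)
  | box (G : Pretensor σ) (A : BoxName)
  | prod (G H : Pretensor σ)

namespace Pretensor

variable {σ : Type}

def edgeCount (d : DirEdge) : Pretensor σ → ℕ
  | unit => 0
  | idt a b => (if d = DirEdge.out a then 1 else 0) + (if d = DirEdge.inp b then 1 else 0)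
  | gen _ e => e.count d
  | box G _ => G.edgeCount d
  | prod G H => G.edgeCount d + H.edgeCount d

def boxCount (A : BoxName) : Pretensor σ → ℕ
  | unit => 0
  | idt _ _ => 0
  | gen _ _ => 0
  | box G B => (if B = A then 1 else 0) + G.boxCount A
  | prod G H => G.boxCount A + H.boxCount A

/-- The pair (edge context, node context) of a directed edge, if it occurs. -/
def ctx2 (d : DirEdge) : Pretensor σ → Option (List BoxName × List BoxName)
  | unit => none
  | idt a b => if d = DirEdge.out a ∨ d = DirEdge.inp b then some ([], []) else none
  | gen _ e => (e.ectx d).map (fun l => (l, []))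
  | box G A => (G.ctx2 d).map (fun p => (p.1, p.2 ++ [A]))
  | prod G H => (G.ctx2 d).orElse (fun _ => H.ctx2 d)

/-- The edge context of a directed edge. -/
def ectxOf (G : Pretensor σ) (d : DirEdge) : Option (List BoxName) := (G.ctx2 d).map (·.1)

/-- The node context of a directed edge. -/
def nctxOf (G : Pretensor σ) (d : DirEdge) : Option (List BoxName) := (G.ctx2 d).map (·.2)

/-- The (total) context of a directed edge: edge context followed by node context. -/
def ctxOf (G : Pretensor σ) (d : DirEdge) : Option (List BoxName) :=
  (G.ctx2 d).map (fun p => p.1 ++ p.2)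

/-- The list of !-boxes enclosing the !-box `A`, inside-out, if `A` occurs. -/
def boxCtx (A : BoxName) : Pretensor σ → Option (List BoxName)
  | unit => none
  | idt _ _ => none
  | gen _ _ => none
  | box G B => if B = A then some [] else (G.boxCtx A).map (· ++ [B])
  | prod G H => (G.boxCtx A).orElse (fun _ => H.boxCtx A)

/-- `A ≺_G B`: the !-box `A` is nested immediately inside the !-box `B` in `G`. -/
def Prec (G : Pretensor σ) (A B : BoxName) : Prop := ∃ l, G.boxCtx A = some (B :: l)

/-- `A` is nested (possibly not immediately) inside `B` in `G`. -/
def nestedIn (G : Pretensor σ) (A B : BoxName) : Prop := Relation.TransGen G.Prec A B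

/-- `A` is a top-level !-box of `G` (it occurs and has no parent !-box). -/
def topLevel (G : Pretensor σ) (A : BoxName) : Prop := G.boxCtx A = some []

def edgeNames : Pretensor σ → Set EdgeName
  | unit => ∅
  | idt a b => {a, b}
  | gen _ e => e.edgeNames
  | box G _ => G.edgeNames
  | prod G H => G.edgeNames ∪ H.edgeNames

def boxNames : Pretensor σ → Set BoxName
  | unit => ∅
  | idt _ _ => ∅
  | gen _ e => e.boxNames
  | box G A => insert A G.boxNames
  | prod G H => G.boxNames ∪ H.boxNames

/-- The directed edge `d` occurs in `G`. -/
def occursDir (G : Pretensor σ) (d : DirEdge) : Prop := G.edgeCount d ≠ 0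

/-- The directed edge `d` is free in `G` (it occurs and its partner does not). -/
def freeDir (G : Pretensor σ) (d : DirEdge) : Prop := G.occursDir d ∧ ¬ G.occursDir d.partner

/-- The edge name `a` is free in `G`: exactly one of `â`, `ǎ` occurs in `G`. -/
def freeName (G : Pretensor σ) (a : EdgeName) : Prop :=
  Xor' (G.occursDir (DirEdge.out a)) (G.occursDir (DirEdge.inp a))

/-- A !-tensor expression: a !-pretensor expression satisfying the freshness
conditions F1, F2 and the context conditions C1, C2, C3. -/
def IsTensorExpr (G : Pretensor σ) : Prop :=
  -- F1: each of `â` and `ǎ` occurs at most once per edge name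
  (∀ d : DirEdge, G.edgeCount d ≤ 1) ∧
  -- F2: each !-box name has at most one occurrence of `[...]_A`
  (∀ A : BoxName, G.boxCount A ≤ 1) ∧
  -- C1: edge context and node context are disjoint
  (∀ (d : DirEdge) (ec nc : List BoxName), G.ctx2 d = some (ec, nc) → ec.Disjoint nc) ∧
  -- C2: edge contexts consist of !-boxes of G, consecutively immediately nested
  (∀ (d : DirEdge) (ec nc : List BoxName), G.ctx2 d = some (ec, nc) →
    (∀ B ∈ ec, G.boxCount B ≠ 0) ∧ List.Chain' G.Prec ec) ∧
  -- C3: coherence for bound pairs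
  (∀ (a : EdgeName) (eo no ei ni : List BoxName),
    G.ctx2 (DirEdge.out a) = some (eo, no) → G.ctx2 (DirEdge.inp a) = some (ei, ni) →
    ∃ es bs : List BoxName, es ++ ni = eo ++ bs ∧ es ++ no = ei ++ bs)

/-- Apply renamings of edge names and box names throughout a !-pretensor expression. -/
def rename (f : EdgeName → EdgeName) (g : BoxName → BoxName) : Pretensor σ → Pretensor σ
  | unit => unit
  | idt a b => idt (f a) (f b)
  | gen φ e => gen φ (e.rename f g)
  | box G A => box (G.rename f g) (g A)
  | prod G H => prod (G.rename f g) (H.rename f g)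

/-- Rename the output edge `b̂` to `ĉ`. -/
def renameOut (b c : EdgeName) : Pretensor σ → Pretensor σ
  | unit => unit
  | idt a y => idt (if a = b then c else a) y
  | gen φ e => gen φ (e.renameOut b c)
  | box G A => box (G.renameOut b c) A
  | prod G H => prod (G.renameOut b c) (H.renameOut b c)

/-- Rename the input edge `b̌` to `č`. -/
def renameInp (b c : EdgeName) : Pretensor σ → Pretensor σ
  | unit => unit
  | idt a y => idt a (if y = b then c else y)
  | gen φ e => gen φ (e.renameInp b c)
  | box G A => box (G.renameInp b c) A
  | prod G H => prod (G.renameInp b c) (H.renameInp b c)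

/-- Rename the edge name `a` (in both directions) to `c`. -/
def renameEdgeName (a c : EdgeName) (G : Pretensor σ) : Pretensor σ :=
  G.rename (fun x => if x = a then c else x) id

/-- Rename the !-box name `A` to `B`. -/
def renameBoxName (A B : BoxName) (G : Pretensor σ) : Pretensor σ :=
  G.rename id (fun X => if X = A then B else X)

/-- The !-box operation `Kill_A`. -/
def kill (A : BoxName) : Pretensor σ → Pretensor σ
  | unit => unit
  | idt a b => idt a b
  | gen φ e => gen φ (e.kill A)
  | box G B => if B = A then unit else box (G.kill A) B
  | prod G H => prod (G.kill A) (H.kill A)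

/-- The !-box operation `Drop_A`. -/
def drop (A : BoxName) : Pretensor σ → Pretensor σ
  | unit => unit
  | idt a b => idt a b
  | gen φ e => gen φ (e.drop A)
  | box G B => if B = A then G else box (G.drop A) B
  | prod G H => prod (G.drop A) (H.drop A)

/-- The !-box operation `Exp_{A,fr}`. -/
def exp (A : BoxName) (fr : Freshness) : Pretensor σ → Pretensor σ
  | unit => unit
  | idt a b => idt a b
  | gen φ e => gen φ (e.exp A fr)
  | box G B => if B = A then prod (box G B) (G.rename fr.em fr.bm) else box (G.exp A fr) B
  | prod G H => prod (G.exp A fr) (H.exp A fr)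

/-- The !-box operation `Copy_{A,fr}`. -/
def copy (A : BoxName) (fr : Freshness) : Pretensor σ → Pretensor σ
  | unit => unit
  | idt a b => idt a b
  | gen φ e => gen φ (e.copy A fr)
  | box G B =>
      if B = A then prod (box G B) (box (G.rename fr.em fr.bm) (fr.bm A))
      else box (G.copy A fr) B
  | prod G H => prod (G.copy A fr) (H.copy A fr)

/-- Weakening `Wk_A^K`: add `K` inside the !-box `A`. -/
def wk (A : BoxName) (K : Pretensor σ) : Pretensor σ → Pretensor σ
  | box G B => if B = A then box (prod G K) B else box (wk A K G) B
  | prod G H => prod (wk A K G) (wk A K H)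
  | G => G

/-- A concrete tensor expression: no !-boxes and no edge groups. -/
def IsConcrete : Pretensor σ → Prop
  | unit => True
  | idt _ _ => True
  | gen _ e => e.noGroups
  | box _ _ => False
  | prod G H => G.IsConcrete ∧ H.IsConcrete

/-- Nesting of !-boxes: `nest [(K₁,B₁),…,(Kₙ,Bₙ)] X = [Kₙ ⋯ [K₁ ⬝ X]_{B₁} ⋯]_{Bₙ}`. -/
def nest : List (Pretensor σ × BoxName) → Pretensor σ → Pretensor σ
  | [], X => X
  | p :: rest, X => nest rest (box (prod p.1 X) p.2)

/-- Equivalence of !-tensor expressions: associativity, commutativity and unit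
laws for product, edgeterm equivalences, renaming of bound edge names to fresh
names, and the identity-contraction laws. -/
inductive Equiv : Pretensor σ → Pretensor σ → Prop
  | refl (G) : Equiv G G
  | symm {G H} : Equiv G H → Equiv H G
  | trans {G H K} : Equiv G H → Equiv H K → Equiv G K
  | prod_congr {G G' H H'} : Equiv G G' → Equiv H H' → Equiv (prod G H) (prod G' H')
  | box_congr {G G'} (A) : Equiv G G' → Equiv (box G A) (box G' A)
  | gen_congr (φ) {e e'} : EdgeTerm.Equiv e e' → Equiv (gen φ e) (gen φ e')
  | prod_assoc (G H K) : Equiv (prod (prod G H) K) (prod G (prod H K))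
  | prod_comm (G H) : Equiv (prod G H) (prod H G)
  | prod_unit (G) : Equiv (prod G unit) G
  | bound_rename (G : Pretensor σ) (a c : EdgeName) :
      G.occursDir (DirEdge.out a) → G.occursDir (DirEdge.inp a) → c ∉ G.edgeNames →
      Equiv G (G.renameEdgeName a c)
  | contract_inp (G : Pretensor σ) (L : List (Pretensor σ × BoxName)) (a b : EdgeName) :
      G.occursDir (DirEdge.inp b) → ¬ G.occursDir (DirEdge.out b) →
      Equiv (prod G (nest L (idt b a))) (prod (G.renameInp b a) (nest L unit))
  | contract_out (H : Pretensor σ) (L : List (Pretensor σ × BoxName)) (a b : EdgeName) :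
      H.occursDir (DirEdge.out b) → ¬ H.occursDir (DirEdge.inp b) →
      Equiv (prod H (nest L (idt a b))) (prod (H.renameOut b a) (nest L unit))

/-- Rename the free edge names of `G` along `rn`. -/
def freeNameB (G : Pretensor σ) (a : EdgeName) : Bool :=
  (G.edgeCount (DirEdge.out a) != 0) ^^ (G.edgeCount (DirEdge.inp a) != 0)

end Pretensor

/-- Rename the free edge names of `G` along `rn`. -/
def renameFree {σ : Type} (rn : EdgeName → EdgeName) (G : Pretensor σ) : Pretensor σ :=
  G.rename (fun a => if G.freeNameB a then rn a else a) id

/-- `fr` is a freshness function for `G`: names occurring in `G` are mapped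
to names not occurring in `G`. -/
def Freshness.IsFreshFor {σ : Type} (fr : Freshness) (G : Pretensor σ) : Prop :=
  (∀ a ∈ G.edgeNames, fr.em a ∉ G.edgeNames) ∧ (∀ A ∈ G.boxNames, fr.bm A ∉ G.boxNames)

/-- The four !-box operations. -/
inductive BOp : Type
  | exp (A : BoxName) (fr : Freshness)
  | kill (A : BoxName)
  | copy (A : BoxName) (fr : Freshness)
  | drop (A : BoxName)

/-- Apply a !-box operation. -/
def BOp.app {σ : Type} : BOp → Pretensor σ → Pretensor σ
  | .exp A fr, G => G.exp A fr
  | .kill A, G => G.kill A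
  | .copy A fr, G => G.copy A fr
  | .drop A, G => G.drop A

/-- A !-box operation is applied appropriately: its freshness function (if any)
is a freshness function for the expression it is applied to. -/
def BOp.OK {σ : Type} : BOp → Pretensor σ → Prop
  | .exp _ fr, G => fr.IsFreshFor G
  | .copy _ fr, G => fr.IsFreshFor G
  | _, _ => True

def BOp.isExpKill : BOp → Prop
  | .exp _ _ => True
  | .kill _ => True
  | _ => False

def BOp.notDrop : BOp → Prop
  | .drop _ => False
  | _ => True

/-- Apply a list of !-box operations, left to right. -/
def applyOps {σ : Type} : List BOp → Pretensor σ → Pretensor σ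
  | [], G => G
  | op :: rest, G => applyOps rest (op.app G)

/-- Each operation in the list is applied appropriately. -/
def OpsOK {σ : Type} : List BOp → Pretensor σ → Prop
  | [], _ => True
  | op :: rest, G => op.OK G ∧ OpsOK rest (op.app G)

/-- An instantiation of `G`: a finite composite of (appropriately applied)
`Exp` and `Kill` operations whose result contains no !-boxes. -/
def IsInst {σ : Type} (i : List BOp) (G : Pretensor σ) : Prop :=
  (∀ op ∈ i, op.isExpKill) ∧ OpsOK i G ∧ (applyOps i G).IsConcrete

/-- Compatible boundaries: identical free edges, the same !-boxes with the same
immediate-nesting relation, and equal contexts on free edges. -/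
def Compatible {σ : Type} (G H : Pretensor σ) : Prop :=
  (∀ d, G.freeDir d ↔ H.freeDir d) ∧
  (∀ A, G.boxCount A ≠ 0 ↔ H.boxCount A ≠ 0) ∧
  (∀ A B, G.Prec A B ↔ H.Prec A B) ∧
  (∀ d, G.freeDir d → G.ctxOf d = H.ctxOf d)

/-- The set of concrete instances of the !-tensor equation `G = H`. -/
def ConcInst {σ : Type} (G H : Pretensor σ) : Set (Pretensor σ × Pretensor σ) :=
  {p | ∃ i : List BOp, IsInst i G ∧ p = (applyOps i G, applyOps i H)}

end BangTensor

namespace BangTensor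

/-- Derivability from a set `S` of concrete equations using only the concrete
product rule (from `G' = H'` infer `K⬝G' = K⬝H'`) and `≡`. -/
inductive Deriv {σ : Type} (S : Set (Pretensor σ × Pretensor σ)) :
    Pretensor σ → Pretensor σ → Prop
  | base {G H : Pretensor σ} : (G, H) ∈ S → Deriv S G H
  | prodRule {G H : Pretensor σ} (K : Pretensor σ) :
      Deriv S G H → Deriv S (Pretensor.prod K G) (Pretensor.prod K H)
  | equivCl {G G' H H' : Pretensor σ} :
      Pretensor.Equiv G G' → Pretensor.Equiv H H' → Deriv S G' H' → Deriv S G H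

/-! ### Auxiliary development for the proof of `weaken_sound`. -/

namespace Pretensor

variable {σ : Type}

/-- Associativity/commutativity/unit structural equivalence (a fragment of `Equiv`). -/
inductive ACE : Pretensor σ → Pretensor σ → Prop
  | refl (G) : ACE G G
  | symm {G H} : ACE G H → ACE H G
  | trans {G H K} : ACE G H → ACE H K → ACE G K
  | prod_congr {G G' H H'} : ACE G G' → ACE H H' → ACE (prod G H) (prod G' H')
  | box_congr {G G'} (A) : ACE G G' → ACE (box G A) (box G' A)
  | assocR (G H K) : ACE (prod (prod G H) K) (prod G (prod H K))
  | commR (G H) : ACE (prod G H) (prod H G)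
  | unitR (G) : ACE (prod G Pretensor.unit) G

theorem ACE.toEquiv {X Y : Pretensor σ} (h : ACE X Y) : Equiv X Y := by
  induction h with
  | refl => exact .refl _
  | symm _ ih => exact .symm ih
  | trans _ _ ih1 ih2 => exact .trans ih1 ih2
  | prod_congr _ _ ih1 ih2 => exact .prod_congr ih1 ih2
  | box_congr A _ ih => exact .box_congr A ih
  | assocR G H K => exact .prod_assoc ..
  | commR G H => exact .prod_comm ..
  | unitR G => exact .prod_unit _

theorem ACE.unit_left (G : Pretensor σ) : ACE (prod Pretensor.unit G) G :=
  (ACE.commR ..).trans (ACE.unitR _)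

theorem ACE.boxNames_eq {X Y : Pretensor σ} (h : ACE X Y) : X.boxNames = Y.boxNames := by
  induction h with
  | refl => rfl
  | symm _ ih => exact ih.symm
  | trans _ _ ih1 ih2 => exact ih1.trans ih2
  | prod_congr _ _ ih1 ih2 => simp [boxNames, ih1, ih2]
  | box_congr A _ ih => simp [boxNames, ih]
  | assocR => simp [boxNames, Set.union_assoc]
  | commR => simp [boxNames, Set.union_comm]
  | unitR => simp [boxNames]

theorem ACE.edgeNames_eq {X Y : Pretensor σ} (h : ACE X Y) : X.edgeNames = Y.edgeNames := by
  induction h with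
  | refl => rfl
  | symm _ ih => exact ih.symm
  | trans _ _ ih1 ih2 => exact ih1.trans ih2
  | prod_congr _ _ ih1 ih2 => simp [edgeNames, ih1, ih2]
  | box_congr A _ ih => simp [edgeNames, ih]
  | assocR => simp [edgeNames, Set.union_assoc]
  | commR => simp [edgeNames, Set.union_comm]
  | unitR => simp [edgeNames]

theorem ACE.isConcrete_iff {X Y : Pretensor σ} (h : ACE X Y) : X.IsConcrete ↔ Y.IsConcrete := by
  induction h with
  | refl => exact Iff.rfl
  | symm _ ih => exact ih.symm
  | trans _ _ ih1 ih2 => exact ih1.trans ih2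
  | prod_congr _ _ ih1 ih2 => simp [IsConcrete, ih1, ih2]
  | box_congr A _ ih => simp [IsConcrete]
  | assocR => simp [IsConcrete, and_assoc]
  | commR => simp [IsConcrete]; tauto
  | unitR => simp [IsConcrete]

theorem ACE.rename_congr {X Y : Pretensor σ} (f g) (h : ACE X Y) :
    ACE (X.rename f g) (Y.rename f g) := by
  induction h with
  | refl => exact .refl _
  | symm _ ih => exact ih.symm
  | trans _ _ ih1 ih2 => exact ih1.trans ih2
  | prod_congr _ _ ih1 ih2 => exact .prod_congr ih1 ih2
  | box_congr A _ ih => exact .box_congr _ ih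
  | assocR G H K => exact .assocR ..
  | commR G H => exact .commR ..
  | unitR G => exact .unitR _

theorem ACE.kill_congr {X Y : Pretensor σ} (B) (h : ACE X Y) :
    ACE (X.kill B) (Y.kill B) := by
  induction h with
  | refl => exact .refl _
  | symm _ ih => exact ih.symm
  | trans _ _ ih1 ih2 => exact ih1.trans ih2
  | prod_congr _ _ ih1 ih2 => exact .prod_congr ih1 ih2
  | box_congr A _ ih =>
      by_cases hA : A = B
      · subst hA; simp only [Pretensor.kill, if_pos rfl]; exact .refl _
      · simpa only [Pretensor.kill, if_neg hA] using ACE.box_congr A ih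
  | assocR G H K => exact .assocR ..
  | commR G H => exact .commR ..
  | unitR G => exact .unitR _

theorem ACE.exp_congr {X Y : Pretensor σ} (B fr) (h : ACE X Y) :
    ACE (X.exp B fr) (Y.exp B fr) := by
  induction h with
  | refl => exact .refl _
  | symm _ ih => exact ih.symm
  | trans _ _ ih1 ih2 => exact ih1.trans ih2
  | prod_congr _ _ ih1 ih2 => exact .prod_congr ih1 ih2
  | box_congr A hGG ih =>
      by_cases hA : A = B
      · subst hA
        simp only [Pretensor.exp, if_pos rfl]
        exact .prod_congr (.box_congr _ hGG) (hGG.rename_congr _ _)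
      · simpa only [Pretensor.exp, if_neg hA] using ACE.box_congr A ih
  | assocR G H K => exact .assocR ..
  | commR G H => exact .commR ..
  | unitR G => exact .unitR _

end Pretensor

namespace Pretensor

variable {σ : Type}

theorem mem_boxNames_of_count {X : Pretensor σ} {D : BoxName} (h : X.boxCount D ≠ 0) :
    D ∈ X.boxNames := by
  induction X with
  | unit => simp [boxCount] at h
  | idt a b => simp [boxCount] at h
  | gen φ e => simp [boxCount] at h
  | box C B ih =>
      simp only [boxCount] at h
      by_cases hB : B = D
      · subst hB; simp [boxNames]
      · simp only [boxNames, Set.mem_insert_iff]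
        right
        exact ih (by simpa [hB] using h)
  | prod X Y ih1 ih2 =>
      simp only [boxCount] at h
      simp only [boxNames, Set.mem_union]
      by_cases h' : X.boxCount D = 0
      · exact Or.inr (ih2 (by omega))
      · exact Or.inl (ih1 h')

theorem ctx_isSome_iff (X : Pretensor σ) (D : BoxName) :
    (X.boxCtx D).isSome ↔ X.boxCount D ≠ 0 := by
  induction X with
  | unit => simp [boxCtx, boxCount]
  | idt a b => simp [boxCtx, boxCount]
  | gen φ e => simp [boxCtx, boxCount]
  | box C B ih =>
      by_cases hB : B = D
      · subst hB; simp [boxCtx, boxCount]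
      · simp [boxCtx, boxCount, hB, ih]
  | prod X Y ih1 ih2 =>
      simp only [boxCtx, boxCount]
      cases h1 : X.boxCtx D with
      | some m => simp [Option.orElse]; have := (ih1.mp (by simp [h1])); omega
      | none =>
          have hx : X.boxCount D = 0 := by
            by_contra hc
            have := ih1.mpr hc; simp [h1] at this
          simp [Option.orElse, hx, ih2]

theorem ctx_none_of_count {X : Pretensor σ} {D : BoxName} (h : X.boxCount D = 0) :
    X.boxCtx D = none := by
  cases hc : X.boxCtx D with
  | none => rfl
  | some m => exact absurd ((ctx_isSome_iff X D).mp (by simp [hc])) (by simp [h])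

theorem count_ne_of_ctx {X : Pretensor σ} {D : BoxName} {m} (h : X.boxCtx D = some m) :
    X.boxCount D ≠ 0 :=
  (ctx_isSome_iff X D).mp (by simp [h])

theorem count_ne_of_mem_ctx {X : Pretensor σ} {D E : BoxName} {m}
    (h : X.boxCtx D = some m) (hE : E ∈ m) : X.boxCount E ≠ 0 := by
  induction X generalizing m with
  | unit => simp [boxCtx] at h
  | idt a b => simp [boxCtx] at h
  | gen φ e => simp [boxCtx] at h
  | box C B ih =>
      simp only [boxCtx] at h
      by_cases hB : B = D
      · simp [hB] at h; subst h; simp at hE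
      · simp only [if_neg hB, Option.map_eq_some_iff] at h
        obtain ⟨m', hm', rfl⟩ := h
        simp only [boxCount]
        rcases List.mem_append.mp hE with hE' | hE'
        · have := ih hm' hE'; omega
        · simp at hE'; subst hE'; simp
  | prod X Y ih1 ih2 =>
      simp only [boxCtx] at h
      simp only [boxCount]
      cases h1 : X.boxCtx D with
      | some m1 =>
          rw [h1] at h; simp [Option.orElse] at h; subst h
          have := ih1 h1 hE; omega
      | none =>
          rw [h1] at h; simp [Option.orElse] at h
          have := ih2 h hE; omega

theorem boxCount_box_le {C : Pretensor σ} {B D : BoxName}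
    (h : ∀ D', (box C B).boxCount D' ≤ 1) : C.boxCount D ≤ 1 := by
  have := h D; simp only [boxCount] at this; omega

theorem boxCount_prod_left {X Y : Pretensor σ} {D : BoxName}
    (h : ∀ D', (prod X Y).boxCount D' ≤ 1) : X.boxCount D ≤ 1 := by
  have := h D; simp only [boxCount] at this; omega

theorem boxCount_prod_right {X Y : Pretensor σ} {D : BoxName}
    (h : ∀ D', (prod X Y).boxCount D' ≤ 1) : Y.boxCount D ≤ 1 := by
  have := h D; simp only [boxCount] at this; omega

theorem ctx_step {X : Pretensor σ} (hcnt : ∀ D', X.boxCount D' ≤ 1) {D E : BoxName} {m}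
    (h : X.boxCtx D = some (E :: m)) : X.boxCtx E = some m := by
  induction X generalizing D m with
  | unit => simp [boxCtx] at h
  | idt a b => simp [boxCtx] at h
  | gen φ e => simp [boxCtx] at h
  | box C B ih =>
      simp only [boxCtx] at h ⊢
      by_cases hB : B = D
      · simp [hB] at h
      · simp only [if_neg hB, Option.map_eq_some_iff] at h
        obtain ⟨m', hm', hm⟩ := h
        cases m' with
        | nil =>
            simp only [List.nil_append] at hm
            injection hm with h1 h2
            subst h1; subst h2
            simp
        | cons E' rest =>
            rw [List.cons_append] at hm
            injection hm with h1 h2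
            subst h1; subst h2
            have hEC : C.boxCount E' ≠ 0 := count_ne_of_mem_ctx hm' (by simp)
            have hBE : ¬ B = E' := by
              rintro rfl
              have h1 := hcnt B; simp [boxCount] at h1; omega
            rw [if_neg hBE, ih (fun D' => boxCount_box_le hcnt) hm']
            rfl
  | prod X Y ih1 ih2 =>
      simp only [boxCtx] at h ⊢
      cases h1 : X.boxCtx D with
      | some m1 =>
          rw [h1] at h; simp [Option.orElse] at h; subst h
          rw [ih1 (fun D' => boxCount_prod_left hcnt) h1]
          simp [Option.orElse]
      | none =>
          rw [h1] at h; simp [Option.orElse] at h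
          have hY := ih2 (fun D' => boxCount_prod_right hcnt) h
          have hYE : Y.boxCount E ≠ 0 := count_ne_of_mem_ctx h (by simp)
          have hXE : X.boxCount E = 0 := by
            have := hcnt E; simp only [boxCount] at this; omega
          rw [ctx_none_of_count hXE]
          simp [Option.orElse, hY]

theorem notMem_ctx_self {X : Pretensor σ} (hcnt : ∀ D', X.boxCount D' ≤ 1) {D : BoxName} {m}
    (h : X.boxCtx D = some m) : D ∉ m := by
  induction X generalizing m with
  | unit => simp [boxCtx] at h
  | idt a b => simp [boxCtx] at h
  | gen φ e => simp [boxCtx] at h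
  | box C B ih =>
      simp only [boxCtx] at h
      by_cases hB : B = D
      · simp [hB] at h; subst h; simp
      · simp only [if_neg hB, Option.map_eq_some_iff] at h
        obtain ⟨m', hm', rfl⟩ := h
        intro hd
        rcases List.mem_append.mp hd with hd | hd
        · exact ih (fun D' => boxCount_box_le hcnt) hm' hd
        · simp at hd; exact hB hd.symm
  | prod X Y ih1 ih2 =>
      simp only [boxCtx] at h
      cases h1 : X.boxCtx D with
      | some m1 =>
          rw [h1] at h; simp [Option.orElse] at h; subst h
          exact ih1 (fun D' => boxCount_prod_left hcnt) h1
      | none =>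
          rw [h1] at h; simp [Option.orElse] at h
          exact ih2 (fun D' => boxCount_prod_right hcnt) h

end Pretensor

namespace Pretensor

variable {σ : Type}

theorem boxCount_rename (f : EdgeName → EdgeName) (g : BoxName ≃ BoxName) (X : Pretensor σ)
    (D : BoxName) : (X.rename f g).boxCount D = X.boxCount (g.symm D) := by
  induction X with
  | unit => rfl
  | idt a b => rfl
  | gen φ e => rfl
  | box C B ih =>
      simp only [rename, boxCount, ih]
      congr 1
      by_cases hB : B = g.symm D
      · subst hB; simp
      · rw [if_neg (by simpa [Equiv.apply_eq_iff_eq_symm_apply] using hB), if_neg hB]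
  | prod X Y ih1 ih2 => simp only [rename, boxCount, ih1, ih2]

theorem boxCtx_rename (f : EdgeName → EdgeName) (g : BoxName ≃ BoxName) (X : Pretensor σ)
    (D : BoxName) : (X.rename f g).boxCtx (g D) = (X.boxCtx D).map (List.map g) := by
  induction X with
  | unit => rfl
  | idt a b => rfl
  | gen φ e => rfl
  | box C B ih =>
      simp only [rename, boxCtx]
      by_cases hB : B = D
      · subst hB; simp
      · rw [if_neg (by simpa using hB), if_neg hB, ih]
        cases X : C.boxCtx D <;> simp
  | prod X Y ih1 ih2 =>
      simp only [rename, boxCtx, ih1, ih2]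
      cases h1 : X.boxCtx D <;> simp [Option.orElse]

theorem boxCtx_prod (X Y : Pretensor σ) (D : BoxName) :
    (prod X Y).boxCtx D = (X.boxCtx D).orElse (fun _ => Y.boxCtx D) := rfl

theorem boxCtx_box (C : Pretensor σ) (B D : BoxName) :
    (box C B).boxCtx D = if B = D then some [] else (C.boxCtx D).map (· ++ [B]) := rfl

theorem boxCount_box' (C : Pretensor σ) (B D : BoxName) :
    (box C B).boxCount D = (if B = D then 1 else 0) + C.boxCount D := rfl

theorem boxCount_prod' (X Y : Pretensor σ) (D : BoxName) :
    (prod X Y).boxCount D = X.boxCount D + Y.boxCount D := rfl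

/-- Number of occurrences of the box `D` inside (the unique) box `B` of `X`. -/
def cntIn (B D : BoxName) : Pretensor σ → ℕ
  | .unit => 0
  | .idt _ _ => 0
  | .gen _ _ => 0
  | .box C E => if E = B then C.boxCount D else cntIn B D C
  | .prod X Y => cntIn B D X + cntIn B D Y

theorem cntIn_le (B D : BoxName) (X : Pretensor σ) : cntIn B D X ≤ X.boxCount D := by
  induction X with
  | unit => simp [cntIn, boxCount]
  | idt a b => simp [cntIn, boxCount]
  | gen φ e => simp [cntIn, boxCount]
  | box C E ih =>
      simp only [cntIn, boxCount]
      by_cases hE : E = B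
      · simp [hE] <;> omega
      · simp [hE] <;> omega
  | prod X Y ih1 ih2 => simp only [cntIn, boxCount]; omega

theorem cntIn_zero {B : BoxName} {X : Pretensor σ} (h : X.boxCount B = 0) (D : BoxName) :
    cntIn B D X = 0 := by
  induction X with
  | unit => rfl
  | idt a b => rfl
  | gen φ e => rfl
  | box C E ih =>
      simp only [boxCount] at h
      have hE : ¬ E = B := by intro he; simp [he] at h
      simp only [cntIn, if_neg hE]
      exact ih (by omega)
  | prod X Y ih1 ih2 =>
      simp only [boxCount] at h
      simp only [cntIn]
      rw [ih1 (by omega), ih2 (by omega)]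

theorem cntIn_pos_ctx {B D : BoxName} {X : Pretensor σ} (hcnt : ∀ D', X.boxCount D' ≤ 1)
    (h : cntIn B D X ≠ 0) : ∃ m, X.boxCtx D = some m ∧ B ∈ m := by
  induction X with
  | unit => simp [cntIn] at h
  | idt a b => simp [cntIn] at h
  | gen φ e => simp [cntIn] at h
  | box C E ih =>
      simp only [cntIn] at h
      by_cases hE : E = B
      · subst hE
        rw [if_pos rfl] at h
        have hsome := (ctx_isSome_iff C D).mpr h
        obtain ⟨m', hm'⟩ := Option.isSome_iff_exists.mp hsome
        have hED : ¬ E = D := by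
          intro he
          have h1 := hcnt D
          rw [boxCount_box', if_pos he] at h1
          omega
        refine ⟨m' ++ [E], ?_, by simp⟩
        simp [boxCtx, hED, hm']
      · rw [if_neg hE] at h
        obtain ⟨m, hm, hBm⟩ := ih (fun D' => boxCount_box_le hcnt) h
        have hED : ¬ E = D := by
          intro he
          have h2 : C.boxCount D ≠ 0 := by
            have := cntIn_le B D C; omega
          have h1 := hcnt D
          rw [boxCount_box', if_pos he] at h1
          omega
        exact ⟨m ++ [E], by simp [boxCtx, hED, hm], by simp [hBm]⟩
  | prod X Y ih1 ih2 =>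
      simp only [cntIn] at h
      by_cases h1 : cntIn B D X = 0
      · have h2 : cntIn B D Y ≠ 0 := by omega
        obtain ⟨m, hm, hBm⟩ := ih2 (fun D' => boxCount_prod_right hcnt) h2
        have hXD : X.boxCount D = 0 := by
          by_contra hc
          have hYD : Y.boxCount D ≠ 0 := by have := cntIn_le B D Y; omega
          have := hcnt D; simp [boxCount] at this; omega
        refine ⟨m, ?_, hBm⟩
        simp [boxCtx, ctx_none_of_count hXD, Option.orElse, hm]
      · obtain ⟨m, hm, hBm⟩ := ih1 (fun D' => boxCount_prod_left hcnt) h1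
        exact ⟨m, by simp [boxCtx, hm, Option.orElse], hBm⟩

theorem boxCount_exp (B : BoxName) (fr : Freshness) (X : Pretensor σ) (D : BoxName) :
    (X.exp B fr).boxCount D = X.boxCount D + cntIn B (fr.bm.symm D) X := by
  induction X with
  | unit => rfl
  | idt a b => rfl
  | gen φ e => rfl
  | box C E ih =>
      by_cases hE : E = B
      · subst hE
        have e2 : cntIn E (fr.bm.symm D) (box C E) = C.boxCount (fr.bm.symm D) := by
          simp [cntIn]
        rw [show (box C E).exp E fr = prod (box C E) (C.rename fr.em fr.bm) by simp [exp], e2,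
          boxCount_prod', boxCount_rename fr.em fr.bm C D]
      · simp only [exp, if_neg hE, boxCount, cntIn, if_neg hE, ih]
        ring
  | prod X Y ih1 ih2 => simp only [exp, boxCount, cntIn, ih1, ih2]; ring

theorem boxCtx_exp_noB {B : BoxName} {fr : Freshness} {X : Pretensor σ}
    (h : X.boxCount B = 0) (D : BoxName) : (X.exp B fr).boxCtx D = X.boxCtx D := by
  induction X with
  | unit => rfl
  | idt a b => rfl
  | gen φ e => rfl
  | box C E ih =>
      simp only [boxCount] at h
      have hE : ¬ E = B := by intro he; simp [he] at h
      simp only [exp, if_neg hE, boxCtx, ih (by omega)]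
  | prod X Y ih1 ih2 =>
      simp only [boxCount] at h
      simp only [exp, boxCtx, ih1 (by omega), ih2 (by omega)]

theorem boxCtx_exp_old {B : BoxName} {fr : Freshness} {X : Pretensor σ}
    (hcnt : ∀ D', X.boxCount D' ≤ 1)
    (hfr : ∀ δ, X.boxCount δ ≠ 0 → X.boxCount (fr.bm δ) = 0)
    {D : BoxName} (hD : X.boxCount D ≠ 0) :
    (X.exp B fr).boxCtx D = X.boxCtx D := by
  induction X with
  | unit => simp [boxCount] at hD
  | idt a b => simp [boxCount] at hD
  | gen φ e => simp [boxCount] at hD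
  | box C E ih =>
      by_cases hE : E = B
      · subst hE
        rw [show (box C E).exp E fr = prod (box C E) (C.rename fr.em fr.bm) by simp [exp],
          boxCtx_prod]
        obtain ⟨m, hm⟩ := Option.isSome_iff_exists.mp ((ctx_isSome_iff (box C E) D).mpr hD)
        rw [hm]
        rfl
      · simp only [exp, if_neg hE, boxCtx]
        by_cases hED : E = D
        · simp [hED]
        · simp only [if_neg hED]
          simp only [boxCount, if_neg hED, Nat.zero_add] at hD
          rw [ih (fun D' => boxCount_box_le hcnt)
            (fun δ hδ => by
              have := hfr δ (by simp [boxCount]; omega)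
              simp only [boxCount] at this; omega) hD]
  | prod X Y ih1 ih2 =>
      have hfr1 : ∀ δ, X.boxCount δ ≠ 0 → X.boxCount (fr.bm δ) = 0 := fun δ hδ => by
        have := hfr δ (by simp [boxCount]; omega); simp only [boxCount] at this; omega
      have hfr2 : ∀ δ, Y.boxCount δ ≠ 0 → Y.boxCount (fr.bm δ) = 0 := fun δ hδ => by
        have := hfr δ (by simp [boxCount]; omega); simp only [boxCount] at this; omega
      simp only [exp, boxCtx]
      by_cases h1 : X.boxCount D = 0
      · have h2 : Y.boxCount D ≠ 0 := by simp only [boxCount] at hD; omega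
        have hnone : (X.exp B fr).boxCtx D = none := by
          apply ctx_none_of_count
          rw [boxCount_exp]
          have hcc : cntIn B (fr.bm.symm D) X = 0 := by
            by_contra hc
            have hs : X.boxCount (fr.bm.symm D) ≠ 0 := by
              have := cntIn_le B (fr.bm.symm D) X; omega
            have := hfr (fr.bm.symm D) (by simp only [boxCount]; omega)
            simp only [Equiv.apply_symm_apply, boxCount] at this
            omega
          omega
        rw [hnone, ctx_none_of_count h1]
        simp [Option.orElse, ih2 (fun D' => boxCount_prod_right hcnt) hfr2 h2]
      · rw [ih1 (fun D' => boxCount_prod_left hcnt) hfr1 h1]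
        obtain ⟨m, hm⟩ := Option.isSome_iff_exists.mp ((ctx_isSome_iff X D).mpr h1)
        simp [hm, Option.orElse]

end Pretensor

namespace Pretensor

variable {σ : Type}

/-- Decorate every !-box `[C]_D` of a term as `[C ⬝ F D]_D`. -/
def deco (F : BoxName → Pretensor σ) : Pretensor σ → Pretensor σ
  | .unit => .unit
  | .idt a b => .idt a b
  | .gen φ e => .gen φ e
  | .box C B => .box (.prod (deco F C) (F B)) B
  | .prod X Y => .prod (deco F X) (deco F Y)

theorem boxNames_deco_sub (F : BoxName → Pretensor σ) (X : Pretensor σ) :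
    X.boxNames ⊆ (deco F X).boxNames := by
  induction X with
  | unit => simp [deco]
  | idt a b => simp [deco]
  | gen φ e => simp [deco, boxNames]
  | box C B ih =>
      simp only [deco, boxNames]
      intro x hx
      rcases hx with hx | hx
      · exact Or.inl hx
      · exact Or.inr (Or.inl (ih hx))
  | prod X Y ih1 ih2 =>
      simp only [deco, boxNames]
      exact Set.union_subset_union ih1 ih2

theorem edgeNames_deco_sub (F : BoxName → Pretensor σ) (X : Pretensor σ) :
    X.edgeNames ⊆ (deco F X).edgeNames := by
  induction X with
  | unit => simp [deco]
  | idt a b => simp [deco]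
  | gen φ e => simp [deco, edgeNames]
  | box C B ih =>
      simp only [deco, edgeNames]
      exact ih.trans Set.subset_union_left
  | prod X Y ih1 ih2 =>
      simp only [deco, edgeNames]
      exact Set.union_subset_union ih1 ih2

theorem boxNames_decoF_sub (F : BoxName → Pretensor σ) {X : Pretensor σ} {D : BoxName}
    (h : X.boxCount D ≠ 0) : (F D).boxNames ⊆ (deco F X).boxNames := by
  induction X with
  | unit => simp [boxCount] at h
  | idt a b => simp [boxCount] at h
  | gen φ e => simp [boxCount] at h
  | box C B ih =>
      simp only [deco, boxNames]
      rw [boxCount_box'] at h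
      by_cases hB : B = D
      · subst hB
        exact fun x hx => Or.inr (Or.inr hx)
      · rw [if_neg hB] at h
        exact fun x hx => Or.inr (Or.inl (ih (by omega) hx))
  | prod X Y ih1 ih2 =>
      rw [boxCount_prod'] at h
      simp only [deco, boxNames]
      by_cases h1 : X.boxCount D = 0
      · exact (ih2 (by omega)).trans Set.subset_union_right
      · exact (ih1 h1).trans Set.subset_union_left

theorem kill_deco (B : BoxName) (F : BoxName → Pretensor σ) (X : Pretensor σ) :
    (deco F X).kill B = deco (fun D => (F D).kill B) (X.kill B) := by
  induction X with
  | unit => rfl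
  | idt a b => rfl
  | gen φ e => rfl
  | box C E ih =>
      by_cases hE : E = B
      · simp [deco, kill, hE]
      · simp [deco, kill, hE, ih]
  | prod X Y ih1 ih2 => simp [deco, kill, ih1, ih2]

theorem deco_congr {F F' : BoxName → Pretensor σ} {X : Pretensor σ}
    (h : ∀ D, X.boxCount D ≠ 0 → F D = F' D) : deco F X = deco F' X := by
  induction X with
  | unit => rfl
  | idt a b => rfl
  | gen φ e => rfl
  | box C E ih =>
      simp only [deco]
      rw [h E (by rw [boxCount_box', if_pos rfl]; omega),
        ih (fun D hD => h D (by rw [boxCount_box']; omega))]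
  | prod X Y ih1 ih2 =>
      simp only [deco]
      rw [ih1 (fun D hD => h D (by rw [boxCount_prod']; omega)),
        ih2 (fun D hD => h D (by rw [boxCount_prod']; omega))]

theorem rename_deco {F F₂ : BoxName → Pretensor σ} (f : EdgeName → EdgeName)
    (g : BoxName → BoxName) {X : Pretensor σ}
    (h : ∀ D, X.boxCount D ≠ 0 → F₂ (g D) = (F D).rename f g) :
    (deco F X).rename f g = deco F₂ (X.rename f g) := by
  induction X with
  | unit => rfl
  | idt a b => rfl
  | gen φ e => rfl
  | box C E ih =>
      simp only [deco, rename]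
      rw [h E (by rw [boxCount_box', if_pos rfl]; omega),
        ih (fun D hD => h D (by rw [boxCount_box']; omega))]
  | prod X Y ih1 ih2 =>
      simp only [deco, rename]
      rw [ih1 (fun D hD => h D (by rw [boxCount_prod']; omega)),
        ih2 (fun D hD => h D (by rw [boxCount_prod']; omega))]

theorem deco_noBox {F : BoxName → Pretensor σ} {X : Pretensor σ}
    (h : ∀ D, X.boxCount D = 0) : deco F X = X := by
  induction X with
  | unit => rfl
  | idt a b => rfl
  | gen φ e => rfl
  | box C E ih =>
      exact absurd (h E) (by rw [boxCount_box', if_pos rfl]; omega)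
  | prod X Y ih1 ih2 =>
      simp only [deco]
      rw [ih1 (fun D => by have := h D; rw [boxCount_prod'] at this; omega),
        ih2 (fun D => by have := h D; rw [boxCount_prod'] at this; omega)]

theorem isConcrete_noBox {X : Pretensor σ} (h : X.IsConcrete) (D : BoxName) :
    X.boxCount D = 0 := by
  induction X with
  | unit => rfl
  | idt a b => rfl
  | gen φ e => rfl
  | box C E ih => exact absurd h (by simp [IsConcrete])
  | prod X Y ih1 ih2 =>
      obtain ⟨h1, h2⟩ := h
      rw [boxCount_prod', ih1 h1, ih2 h2]

end Pretensor

namespace Pretensor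

variable {σ : Type}

theorem list_split_unique {α : Type _} {b : α} :
    ∀ {s s' t t' : List α}, s ++ b :: t = s' ++ b :: t' → b ∉ s → b ∉ s' →
      s = s' ∧ t = t' := by
  intro s
  induction s with
  | nil =>
      intro s' t t' h hb hb'
      cases s' with
      | nil => simp_all
      | cons x s'' =>
          simp only [List.nil_append, List.cons_append] at h
          injection h with h1 h2
          subst h1
          simp at hb'
  | cons x s₁ ih =>
      intro s' t t' h hb hb'
      cases s' with
      | nil =>
          simp only [List.cons_append, List.nil_append] at h
          injection h with h1 h2
          subst h1
          simp at hb
      | cons y s₂ =>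
          simp only [List.cons_append] at h
          injection h with h1 h2
          subst h1
          obtain ⟨hs, ht⟩ := ih h2 (by simp_all) (by simp_all)
          exact ⟨by rw [hs], ht⟩

theorem boxCtx_exp_new {B : BoxName} {fr : Freshness} {X : Pretensor σ}
    (hcnt : ∀ D', X.boxCount D' ≤ 1)
    (hfr : ∀ δ, X.boxCount δ ≠ 0 → X.boxCount (fr.bm δ) = 0)
    {D₀ : BoxName} {m₁ m₂ : List BoxName}
    (h : X.boxCtx D₀ = some (m₁ ++ B :: m₂)) (hB1 : B ∉ m₁) :
    (X.exp B fr).boxCtx (fr.bm D₀) = some (m₁.map fr.bm ++ m₂) := by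
  have hD₀ : X.boxCount D₀ ≠ 0 := count_ne_of_ctx h
  have hfrD₀ : X.boxCount (fr.bm D₀) = 0 := hfr D₀ hD₀
  induction X generalizing m₁ m₂ with
  | unit => simp [boxCtx] at h
  | idt a b => simp [boxCtx] at h
  | gen φ e => simp [boxCtx] at h
  | box C E ih =>
      rw [boxCtx_box] at h
      by_cases hED : E = D₀
      · rw [if_pos hED] at h
        injection h with h'
        exact absurd h'.symm (by simp)
      · rw [if_neg hED, Option.map_eq_some_iff] at h
        obtain ⟨m', hm', happ⟩ := h
        have hcntC : ∀ D', C.boxCount D' ≤ 1 := fun D' => boxCount_box_le hcnt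
        by_cases hE : E = B
        · subst hE
          have hBm' : E ∉ m' := by
            intro hb
            have := count_ne_of_mem_ctx hm' hb
            have h1 := hcnt E
            rw [boxCount_box', if_pos rfl] at h1
            omega
          have hsplit : m' = m₁ ∧ ([] : List BoxName) = m₂ := by
            apply list_split_unique (t := ([] : List BoxName)) _ hBm' hB1
            simpa using happ
          obtain ⟨rfl, hm₂⟩ := hsplit
          rw [show ((box C E).exp E fr) = prod (box C E) (C.rename fr.em fr.bm) by simp [exp],
            boxCtx_prod, ctx_none_of_count (by simpa using hfrD₀)]
          simp only [Option.orElse]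
          rw [boxCtx_rename fr.em fr.bm C D₀, hm', ← hm₂]
          simp
        · have hEcnt : (box C E).boxCount E ≠ 0 := by rw [boxCount_box', if_pos rfl]; omega
          have hfrE : fr.bm D₀ ≠ E := by
            intro he
            rw [he] at hfrD₀
            exact hEcnt hfrD₀
          cases m₂ using List.reverseRecOn with
          | nil =>
              exfalso
              obtain ⟨-, h2⟩ := List.append_inj' happ rfl
              injection h2 with h2
              exact hE h2
          | append_singleton m₂' e =>
              have happ' : m' ++ [E] = (m₁ ++ B :: m₂') ++ [e] := by
                simpa using happ
              obtain ⟨h1, h2⟩ := List.append_inj' happ' rfl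
              injection h2 with h2
              subst h2
              have hD₀C : C.boxCount D₀ ≠ 0 := count_ne_of_ctx (by rw [hm', h1])
              have hfrC : ∀ δ, C.boxCount δ ≠ 0 → C.boxCount (fr.bm δ) = 0 := by
                intro δ hδ
                have := hfr δ (by rw [boxCount_box']; omega)
                rw [boxCount_box'] at this
                omega
              have ihC := ih hcntC hfrC (by rw [hm', h1]) hB1 hD₀C (hfrC D₀ hD₀C)
              rw [show ((box C E).exp B fr) = box (C.exp B fr) E by simp [exp, hE],
                boxCtx_box, if_neg (fun he => hfrE he.symm), ihC]
              simp
  | prod X Y ih1 ih2 =>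
      have hcnt1 : ∀ D', X.boxCount D' ≤ 1 := fun D' => boxCount_prod_left hcnt
      have hcnt2 : ∀ D', Y.boxCount D' ≤ 1 := fun D' => boxCount_prod_right hcnt
      have hfr1 : ∀ δ, X.boxCount δ ≠ 0 → X.boxCount (fr.bm δ) = 0 := by
        intro δ hδ
        have := hfr δ (by rw [boxCount_prod']; omega)
        rw [boxCount_prod'] at this; omega
      have hfr2 : ∀ δ, Y.boxCount δ ≠ 0 → Y.boxCount (fr.bm δ) = 0 := by
        intro δ hδ
        have := hfr δ (by rw [boxCount_prod']; omega)
        rw [boxCount_prod'] at this; omega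
      rw [boxCtx_prod] at h
      rw [show ((prod X Y).exp B fr) = prod (X.exp B fr) (Y.exp B fr) from rfl, boxCtx_prod]
      cases h1 : X.boxCtx D₀ with
      | some mx =>
          rw [h1] at h
          simp only [Option.orElse] at h
          injection h with h'
          have := ih1 hcnt1 hfr1 (by rw [h1, h']) hB1 (count_ne_of_ctx h1)
            (hfr1 D₀ (count_ne_of_ctx h1))
          rw [this]
          rfl
      | none =>
          rw [h1] at h
          simp only [Option.orElse] at h
          have hXnone : (X.exp B fr).boxCtx (fr.bm D₀) = none := by
            apply ctx_none_of_count
            rw [boxCount_exp]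
            have e1 : X.boxCount (fr.bm D₀) = 0 := by
              have := hfrD₀; rw [boxCount_prod'] at this; omega
            have e2 : cntIn B (fr.bm.symm (fr.bm D₀)) X = 0 := by
              have hx : X.boxCount D₀ = 0 := by
                by_contra hc
                have := (ctx_isSome_iff X D₀).mpr hc
                rw [h1] at this
                simp at this
              rw [Equiv.symm_apply_apply]
              have := cntIn_le B D₀ X
              omega
            omega
          rw [hXnone]
          simp only [Option.orElse]
          exact ih2 hcnt2 hfr2 h hB1 (count_ne_of_ctx h) (hfr2 D₀ (count_ne_of_ctx h))

end Pretensor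

namespace Pretensor

variable {σ : Type}

theorem boxCount_kill_le (B D : BoxName) (X : Pretensor σ) :
    (X.kill B).boxCount D ≤ X.boxCount D := by
  induction X with
  | unit => simp [kill]
  | idt a b => simp [kill]
  | gen φ e => simp [kill, boxCount]
  | box C E ih =>
      by_cases hE : E = B
      · simp [kill, hE, boxCount]
      · simp only [kill, if_neg hE, boxCount_box']
        omega
  | prod X Y ih1 ih2 =>
      simp only [kill, boxCount_prod']
      omega

theorem boxCtx_kill {B : BoxName} {X : Pretensor σ} (hcnt : ∀ D', X.boxCount D' ≤ 1)
    (D : BoxName) :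
    (X.kill B).boxCtx D
      = (X.boxCtx D).bind (fun m => if D = B ∨ B ∈ m then none else some m) := by
  induction X with
  | unit => rfl
  | idt a b => rfl
  | gen φ e => rfl
  | box C E ih =>
      by_cases hE : E = B
      · subst hE
        rw [show (box C E).kill E = Pretensor.unit by simp [kill]]
        rw [boxCtx_box]
        by_cases hED : E = D
        · subst hED
          simp [boxCtx]
        · rw [if_neg hED]
          cases hc : C.boxCtx D <;> simp [boxCtx]
      · rw [show (box C E).kill B = box (C.kill B) E by simp [kill, hE], boxCtx_box,
          boxCtx_box, ih (fun D' => boxCount_box_le hcnt)]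
        by_cases hED : E = D
        · rw [if_pos hED, if_pos hED]
          subst hED
          simp [fun h => hE h]
        · rw [if_neg hED, if_neg hED]
          cases hc : C.boxCtx D with
          | none => simp
          | some m =>
              by_cases hg : D = B ∨ B ∈ m
              · have hg' : D = B ∨ B ∈ m ∨ B = E := hg.imp id Or.inl
                simp [hg, hg']
              · have hg' : ¬ (D = B ∨ B ∈ m ∨ B = E) := by
                  push_neg at hg ⊢
                  exact ⟨hg.1, hg.2, fun he => hE he.symm⟩
                simp [hg, hg']
  | prod X Y ih1 ih2 =>
      rw [show (prod X Y).kill B = prod (X.kill B) (Y.kill B) from rfl, boxCtx_prod,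
        boxCtx_prod, ih1 (fun D' => boxCount_prod_left hcnt),
        ih2 (fun D' => boxCount_prod_right hcnt)]
      cases h1 : X.boxCtx D with
      | none => simp [Option.orElse]
      | some m =>
          have hY : Y.boxCtx D = none := by
            apply ctx_none_of_count
            have hX : X.boxCount D ≠ 0 := count_ne_of_ctx h1
            have := hcnt D
            rw [boxCount_prod'] at this
            omega
          rw [hY]
          by_cases hg : D = B ∨ B ∈ m
          · simp [Option.orElse, hg]
          · simp [Option.orElse, hg]

end Pretensor

namespace Pretensor

variable {σ : Type}

theorem ACE.rot2 (a b c : Pretensor σ) : ACE (prod (prod a c) b) (prod a (prod b c)) :=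
  (ACE.assocR a c b).trans (ACE.prod_congr (.refl a) (.commR c b))

theorem ACE.rot1 (a b c : Pretensor σ) : ACE (prod (prod a c) b) (prod (prod a b) c) :=
  (ACE.rot2 a b c).trans ((ACE.assocR a b c).symm)

theorem wk_eq_self {A : BoxName} {K X : Pretensor σ} (h : X.boxCount A = 0) :
    wk A K X = X := by
  induction X with
  | unit => rfl
  | idt a b => rfl
  | gen φ e => rfl
  | box C E ih =>
      rw [boxCount_box'] at h
      have hE : ¬ E = A := by intro he; rw [if_pos he] at h; omega
      rw [if_neg hE] at h
      simp [wk, hE, ih (by omega)]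
  | prod X Y ih1 ih2 =>
      rw [boxCount_prod'] at h
      simp [wk, ih1 (by omega), ih2 (by omega)]

theorem deco_trivial {A : BoxName} {K : Pretensor σ} {X : Pretensor σ}
    (h : X.boxCount A = 0) :
    ACE (deco (fun D => if D = A then K else Pretensor.unit) X) X := by
  induction X with
  | unit => exact .refl _
  | idt a b => exact .refl _
  | gen φ e => exact .refl _
  | box C E ih =>
      rw [boxCount_box'] at h
      have hE : ¬ E = A := by intro he; rw [if_pos he] at h; omega
      rw [if_neg hE] at h
      simp only [deco, if_neg hE]
      exact ACE.box_congr E ((ACE.unitR _).trans (ih (by omega)))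
  | prod X Y ih1 ih2 =>
      rw [boxCount_prod'] at h
      exact ACE.prod_congr (ih1 (by omega)) (ih2 (by omega))

theorem wk_ace_deco {A : BoxName} {K : Pretensor σ} {X : Pretensor σ}
    (h : X.boxCount A ≤ 1) :
    ACE (wk A K X) (deco (fun D => if D = A then K else Pretensor.unit) X) := by
  induction X with
  | unit => exact .refl _
  | idt a b => exact .refl _
  | gen φ e => exact .refl _
  | box C E ih =>
      rw [boxCount_box'] at h
      by_cases hE : E = A
      · rw [if_pos hE] at h
        subst hE
        simp only [wk, if_pos rfl, deco, if_pos rfl]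
        exact ACE.box_congr E (ACE.prod_congr (deco_trivial (by omega)).symm (.refl K))
      · rw [if_neg hE] at h
        simp only [wk, if_neg hE, deco, if_neg hE]
        exact ACE.box_congr E ((ih (by omega)).trans ((ACE.unitR _).symm))
  | prod X Y ih1 ih2 =>
      rw [boxCount_prod'] at h
      exact ACE.prod_congr (ih1 (by omega)) (ih2 (by omega))

theorem exp_deco_none {B : BoxName} {fr : Freshness} {F F' : BoxName → Pretensor σ}
    {Y : Pretensor σ} (hB : Y.boxCount B = 0)
    (h : ∀ D, Y.boxCount D ≠ 0 → F' D = (F D).exp B fr) :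
    (deco F Y).exp B fr = deco F' (Y.exp B fr) := by
  induction Y with
  | unit => rfl
  | idt a b => rfl
  | gen φ e => rfl
  | box C E ih =>
      rw [boxCount_box'] at hB
      have hE : ¬ E = B := by intro he; rw [if_pos he] at hB; omega
      rw [if_neg hE] at hB
      simp only [deco, exp, if_neg hE]
      rw [ih (by omega) (fun D hD => h D (by rw [boxCount_box']; omega)),
        h E (by rw [boxCount_box', if_pos rfl]; omega)]
  | prod X Y ih1 ih2 =>
      rw [boxCount_prod'] at hB
      simp only [deco, exp]
      rw [ih1 (by omega) (fun D hD => h D (by rw [boxCount_prod']; omega)),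
        ih2 (by omega) (fun D hD => h D (by rw [boxCount_prod']; omega))]

end Pretensor

namespace Pretensor

variable {σ : Type}

theorem exp_deco_top {B : BoxName} {fr : Freshness} {F F' : BoxName → Pretensor σ} :
    ∀ (Y : Pretensor σ),
      Y.boxCtx B = some [] →
      (∀ D', Y.boxCount D' ≤ 1) →
      F' B = F B →
      (∀ D m, Y.boxCtx D = some m → B ∈ m → F' (fr.bm D) = (F D).rename fr.em fr.bm) →
      (∀ D m, Y.boxCtx D = some m → B ∈ m → F' D = F D) →
      (∀ D, Y.boxCount D ≠ 0 → D ≠ B → (∀ m, Y.boxCtx D = some m → B ∉ m) →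
        F' D = (F D).exp B fr) →
      ACE ((deco F Y).exp B fr)
        (prod (deco F' (Y.exp B fr)) ((F B).rename fr.em fr.bm)) := by
  intro Y
  induction Y with
  | unit => intro hctx _ _ _ _ _; simp [boxCtx] at hctx
  | idt a b => intro hctx _ _ _ _ _; simp [boxCtx] at hctx
  | gen φ e => intro hctx _ _ _ _ _; simp [boxCtx] at hctx
  | box C E ih =>
      intro hctx hcnt hFB himg hund hoth
      rw [boxCtx_box] at hctx
      by_cases hE : E = B
      · subst hE
        have hBC : C.boxCount E = 0 := by
          have := hcnt E; rw [boxCount_box', if_pos rfl] at this; omega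
        have h1 : (deco F (box C E)).exp E fr
            = prod (box (prod (deco F C) (F E)) E)
                (prod ((deco F C).rename fr.em fr.bm) ((F E).rename fr.em fr.bm)) := by
          simp [deco, exp, rename]
        have h2 : (box C E).exp E fr = prod (box C E) (C.rename fr.em fr.bm) := by
          simp [exp]
        have hren : (deco F C).rename fr.em fr.bm = deco F' (C.rename fr.em fr.bm) := by
          apply rename_deco
          intro D hD
          have hDE : ¬ E = D := fun he => by rw [he] at hBC; exact hD hBC
          obtain ⟨m', hm'⟩ := Option.isSome_iff_exists.mp ((ctx_isSome_iff C D).mpr hD)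
          exact himg D (m' ++ [E]) (by rw [boxCtx_box, if_neg hDE, hm']; rfl) (by simp)
        have hdecoC : deco F' C = deco F C := by
          apply deco_congr
          intro D hD
          have hDE : ¬ E = D := fun he => by rw [he] at hBC; exact hD hBC
          obtain ⟨m', hm'⟩ := Option.isSome_iff_exists.mp ((ctx_isSome_iff C D).mpr hD)
          exact hund D (m' ++ [E]) (by rw [boxCtx_box, if_neg hDE, hm']; rfl) (by simp)
        rw [h1, h2]
        rw [show deco F' (prod (box C E) (C.rename fr.em fr.bm))
            = prod (box (prod (deco F' C) (F' E)) E) (deco F' (C.rename fr.em fr.bm)) from rfl]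
        rw [hdecoC, hFB, ← hren]
        exact (ACE.assocR _ _ _).symm
      · rw [if_neg hE] at hctx
        rcases Option.map_eq_some_iff.mp hctx with ⟨m', hm', hmm⟩
        simp at hmm
  | prod Y₁ Y₂ ih1 ih2 =>
      intro hctx hcnt hFB himg hund hoth
      rw [boxCtx_prod] at hctx
      have hcnt1 : ∀ D', Y₁.boxCount D' ≤ 1 := fun D' => boxCount_prod_left hcnt
      have hcnt2 : ∀ D', Y₂.boxCount D' ≤ 1 := fun D' => boxCount_prod_right hcnt
      cases h1 : Y₁.boxCtx B with
      | some l =>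
          rw [h1] at hctx
          simp only [Option.orElse] at hctx
          injection hctx with hl
          subst hl
          have hB1 : Y₁.boxCount B ≠ 0 := count_ne_of_ctx h1
          have hB2 : Y₂.boxCount B = 0 := by
            have := hcnt B; rw [boxCount_prod'] at this; omega
          have hlift1 : ∀ D m, Y₁.boxCtx D = some m → (prod Y₁ Y₂).boxCtx D = some m := by
            intro D m hm
            rw [boxCtx_prod, hm]
            rfl
          have hace1 := ih1 h1 hcnt1 hFB
            (fun D m hm hb => himg D m (hlift1 D m hm) hb)
            (fun D m hm hb => hund D m (hlift1 D m hm) hb)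
            (fun D hD hDB hnu => hoth D
              (by rw [boxCount_prod']; omega) hDB
              (fun m hm => by
                obtain ⟨m', hm'⟩ := Option.isSome_iff_exists.mp ((ctx_isSome_iff Y₁ D).mpr hD)
                rw [boxCtx_prod, hm'] at hm
                simp only [Option.orElse] at hm
                injection hm with hmm
                exact hmm ▸ hnu m' hm'))
          have hnone2 : (deco F Y₂).exp B fr = deco F' (Y₂.exp B fr) := by
            apply exp_deco_none hB2
            intro D hD
            have hD1 : Y₁.boxCount D = 0 := by
              have := hcnt D; rw [boxCount_prod'] at this; omega
            have hDB : D ≠ B := by rintro rfl; exact hD hB2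
            refine hoth D (by rw [boxCount_prod']; omega) hDB ?_
            intro m hm hb
            rw [boxCtx_prod, ctx_none_of_count hD1] at hm
            simp only [Option.orElse] at hm
            exact (count_ne_of_mem_ctx hm hb) hB2
          show ACE (prod ((deco F Y₁).exp B fr) ((deco F Y₂).exp B fr)) _
          rw [hnone2]
          exact (ACE.prod_congr hace1 (.refl _)).trans (ACE.rot1 _ _ _)
      | none =>
          rw [h1] at hctx
          simp only [Option.orElse] at hctx
          have hB1 : Y₁.boxCount B = 0 := by
            by_contra hc
            have := (ctx_isSome_iff Y₁ B).mpr hc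
            rw [h1] at this
            simp at this
          have hlift2 : ∀ D m, Y₂.boxCtx D = some m → (prod Y₁ Y₂).boxCtx D = some m := by
            intro D m hm
            have hD2 := count_ne_of_ctx hm
            have hD1 : Y₁.boxCount D = 0 := by
              have := hcnt D; rw [boxCount_prod'] at this; omega
            rw [boxCtx_prod, ctx_none_of_count hD1]
            simp only [Option.orElse]
            exact hm
          have hace2 := ih2 hctx hcnt2 hFB
            (fun D m hm hb => himg D m (hlift2 D m hm) hb)
            (fun D m hm hb => hund D m (hlift2 D m hm) hb)
            (fun D hD hDB hnu => hoth D
              (by rw [boxCount_prod']; omega) hDB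
              (fun m hm => by
                have hD1 : Y₁.boxCount D = 0 := by
                  have := hcnt D; rw [boxCount_prod'] at this; omega
                rw [boxCtx_prod, ctx_none_of_count hD1] at hm
                simp only [Option.orElse] at hm
                exact hnu m hm))
          have hnone1 : (deco F Y₁).exp B fr = deco F' (Y₁.exp B fr) := by
            apply exp_deco_none hB1
            intro D hD
            have hDB : D ≠ B := by rintro rfl; exact hD hB1
            refine hoth D (by rw [boxCount_prod']; omega) hDB ?_
            intro m hm hb
            obtain ⟨m', hm'⟩ := Option.isSome_iff_exists.mp ((ctx_isSome_iff Y₁ D).mpr hD)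
            rw [boxCtx_prod, hm'] at hm
            simp only [Option.orElse] at hm
            injection hm with hmm
            subst hmm
            exact (count_ne_of_mem_ctx hm' hb) hB1
          show ACE (prod ((deco F Y₁).exp B fr) ((deco F Y₂).exp B fr)) _
          rw [hnone1]
          exact (ACE.prod_congr (.refl _) hace2).trans ((ACE.assocR _ _ _).symm)

end Pretensor

namespace Pretensor

variable {σ : Type}

theorem exp_deco_deep {B : BoxName} {fr : Freshness} {F F' : BoxName → Pretensor σ}
    {P : BoxName} :
    ∀ (Y : Pretensor σ) (mt : List BoxName),
      Y.boxCtx B = some (P :: mt) →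
      (∀ D', Y.boxCount D' ≤ 1) →
      F' B = F B →
      F' P = prod ((F P).exp B fr) ((F B).rename fr.em fr.bm) →
      (∀ D m, Y.boxCtx D = some m → B ∈ m → F' (fr.bm D) = (F D).rename fr.em fr.bm) →
      (∀ D m, Y.boxCtx D = some m → B ∈ m → F' D = F D) →
      (∀ D, Y.boxCount D ≠ 0 → D ≠ B → D ≠ P → (∀ m, Y.boxCtx D = some m → B ∉ m) →
        F' D = (F D).exp B fr) →
      ACE ((deco F Y).exp B fr) (deco F' (Y.exp B fr)) := by
  intro Y
  induction Y with
  | unit => intro mt hctx _ _ _ _ _ _; simp [boxCtx] at hctx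
  | idt a b => intro mt hctx _ _ _ _ _ _; simp [boxCtx] at hctx
  | gen φ e => intro mt hctx _ _ _ _ _ _; simp [boxCtx] at hctx
  | box C E ih =>
      intro mt hctx hcnt hFB hpar himg hund hoth
      rw [boxCtx_box] at hctx
      have hE : ¬ E = B := by
        intro he
        rw [if_pos he] at hctx
        injection hctx with h'
        simp at h'
      rw [if_neg hE] at hctx
      rcases Option.map_eq_some_iff.mp hctx with ⟨l', hl', happ⟩
      have hcntC : ∀ D', C.boxCount D' ≤ 1 := fun D' => boxCount_box_le hcnt
      have hEC : C.boxCount E = 0 := by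
        have := hcnt E; rw [boxCount_box', if_pos rfl] at this; omega
      have hBneE : B ≠ E := fun h => hE h.symm
      have hliftC : ∀ D m, C.boxCtx D = some m → (box C E).boxCtx D = some (m ++ [E]) := by
        intro D m hm
        have hDE : ¬ E = D := fun he => by rw [he] at hEC; exact (count_ne_of_ctx hm) hEC
        rw [boxCtx_box, if_neg hDE, hm]
        rfl
      have hmemE : ∀ D, ¬ E = D → ∀ m, (box C E).boxCtx D = some m →
          ∃ mc, C.boxCtx D = some mc ∧ m = mc ++ [E] := by
        intro D hDE m hm
        rw [boxCtx_box, if_neg hDE] at hm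
        rcases Option.map_eq_some_iff.mp hm with ⟨mc, hmc, hh⟩
        exact ⟨mc, hmc, hh.symm⟩
      have hexpbox : (deco F (box C E)).exp B fr
          = box (prod ((deco F C).exp B fr) ((F E).exp B fr)) E := by
        simp [deco, exp, hE]
      have hexpplain : (box C E).exp B fr = box (C.exp B fr) E := by
        simp [exp, hE]
      cases l' with
      | nil =>
          simp only [List.nil_append] at happ
          injection happ with hPE hmt
          subst hPE
          have htop := exp_deco_top (F := F) (F' := F') C hl' hcntC hFB
            (fun D m hm hb => himg D (m ++ [E]) (hliftC D m hm) (by simp [hb]))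
            (fun D m hm hb => hund D (m ++ [E]) (hliftC D m hm) (by simp [hb]))
            (fun D hD hDB hnu => by
              have hDE : ¬ E = D := fun he => by rw [he] at hEC; exact hD hEC
              refine hoth D (by rw [boxCount_box']; omega) hDB
                (fun he => hDE he.symm) ?_
              intro m hm hb
              obtain ⟨mc, hmc, rfl⟩ := hmemE D hDE m hm
              rcases List.mem_append.mp hb with hb | hb
              · exact hnu mc hmc hb
              · simp at hb; exact hBneE hb)
          rw [hexpbox, hexpplain]
          rw [show deco F' (box (C.exp B fr) E)
              = box (prod (deco F' (C.exp B fr)) (F' E)) E from rfl]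
          rw [hpar]
          exact ACE.box_congr E ((ACE.prod_congr htop (.refl _)).trans (ACE.rot2 _ _ _))
      | cons P' rest =>
          rw [List.cons_append] at happ
          injection happ with hPP hmt
          subst hPP
          subst hmt
          have hPC : C.boxCount P' ≠ 0 := count_ne_of_mem_ctx hl' (by simp)
          have hEP : E ≠ P' := by
            intro he
            rw [he] at hEC
            exact hPC hEC
          have hace := ih rest hl' hcntC hFB hpar
            (fun D m hm hb => himg D (m ++ [E]) (hliftC D m hm) (by simp [hb]))
            (fun D m hm hb => hund D (m ++ [E]) (hliftC D m hm) (by simp [hb]))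
            (fun D hD hDB hDP hnu => by
              have hDE : ¬ E = D := fun he => by rw [he] at hEC; exact hD hEC
              refine hoth D (by rw [boxCount_box']; omega) hDB hDP ?_
              intro m hm hb
              obtain ⟨mc, hmc, rfl⟩ := hmemE D hDE m hm
              rcases List.mem_append.mp hb with hb | hb
              · exact hnu mc hmc hb
              · simp at hb; exact hBneE hb)
          have hothE : F' E = (F E).exp B fr := by
            refine hoth E (by rw [boxCount_box', if_pos rfl]; omega) hE hEP ?_
            intro m hm hb
            rw [boxCtx_box, if_pos rfl] at hm
            injection hm with hm
            subst hm
            simp at hb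
          rw [hexpbox, hexpplain]
          rw [show deco F' (box (C.exp B fr) E)
              = box (prod (deco F' (C.exp B fr)) (F' E)) E from rfl]
          rw [hothE]
          exact ACE.box_congr E (ACE.prod_congr hace (.refl _))
  | prod Y₁ Y₂ ih1 ih2 =>
      intro mt hctx hcnt hFB hpar himg hund hoth
      rw [boxCtx_prod] at hctx
      have hcnt1 : ∀ D', Y₁.boxCount D' ≤ 1 := fun D' => boxCount_prod_left hcnt
      have hcnt2 : ∀ D', Y₂.boxCount D' ≤ 1 := fun D' => boxCount_prod_right hcnt
      cases h1 : Y₁.boxCtx B with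
      | some l =>
          rw [h1] at hctx
          simp only [Option.orElse] at hctx
          injection hctx with hl
          subst hl
          have hB1 : Y₁.boxCount B ≠ 0 := count_ne_of_ctx h1
          have hB2 : Y₂.boxCount B = 0 := by
            have := hcnt B; rw [boxCount_prod'] at this; omega
          have hP1 : Y₁.boxCount P ≠ 0 := count_ne_of_mem_ctx h1 (by simp)
          have hlift1 : ∀ D m, Y₁.boxCtx D = some m → (prod Y₁ Y₂).boxCtx D = some m := by
            intro D m hm
            rw [boxCtx_prod, hm]
            rfl
          have hace1 := ih1 mt h1 hcnt1 hFB hpar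
            (fun D m hm hb => himg D m (hlift1 D m hm) hb)
            (fun D m hm hb => hund D m (hlift1 D m hm) hb)
            (fun D hD hDB hDP hnu => hoth D
              (by rw [boxCount_prod']; omega) hDB hDP
              (fun m hm => by
                obtain ⟨m', hm'⟩ := Option.isSome_iff_exists.mp ((ctx_isSome_iff Y₁ D).mpr hD)
                rw [boxCtx_prod, hm'] at hm
                simp only [Option.orElse] at hm
                injection hm with hmm
                exact hmm ▸ hnu m' hm'))
          have hnone2 : (deco F Y₂).exp B fr = deco F' (Y₂.exp B fr) := by
            apply exp_deco_none hB2
            intro D hD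
            have hD1 : Y₁.boxCount D = 0 := by
              have := hcnt D; rw [boxCount_prod'] at this; omega
            have hDB : D ≠ B := by rintro rfl; exact hD hB2
            have hDP : D ≠ P := by
              rintro rfl
              exact hP1 hD1
            refine hoth D (by rw [boxCount_prod']; omega) hDB hDP ?_
            intro m hm hb
            rw [boxCtx_prod, ctx_none_of_count hD1] at hm
            simp only [Option.orElse] at hm
            exact (count_ne_of_mem_ctx hm hb) hB2
          show ACE (prod ((deco F Y₁).exp B fr) ((deco F Y₂).exp B fr)) _
          rw [hnone2]
          exact ACE.prod_congr hace1 (.refl _)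
      | none =>
          rw [h1] at hctx
          simp only [Option.orElse] at hctx
          have hB1 : Y₁.boxCount B = 0 := by
            by_contra hc
            have := (ctx_isSome_iff Y₁ B).mpr hc
            rw [h1] at this
            simp at this
          have hP2 : Y₂.boxCount P ≠ 0 := count_ne_of_mem_ctx hctx (by simp)
          have hlift2 : ∀ D m, Y₂.boxCtx D = some m → (prod Y₁ Y₂).boxCtx D = some m := by
            intro D m hm
            have hD2 := count_ne_of_ctx hm
            have hD1 : Y₁.boxCount D = 0 := by
              have := hcnt D; rw [boxCount_prod'] at this; omega
            rw [boxCtx_prod, ctx_none_of_count hD1]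
            simp only [Option.orElse]
            exact hm
          have hace2 := ih2 mt hctx hcnt2 hFB hpar
            (fun D m hm hb => himg D m (hlift2 D m hm) hb)
            (fun D m hm hb => hund D m (hlift2 D m hm) hb)
            (fun D hD hDB hDP hnu => hoth D
              (by rw [boxCount_prod']; omega) hDB hDP
              (fun m hm => by
                have hD1 : Y₁.boxCount D = 0 := by
                  have := hcnt D; rw [boxCount_prod'] at this; omega
                rw [boxCtx_prod, ctx_none_of_count hD1] at hm
                simp only [Option.orElse] at hm
                exact hnu m hm))
          have hnone1 : (deco F Y₁).exp B fr = deco F' (Y₁.exp B fr) := by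
            apply exp_deco_none hB1
            intro D hD
            have hDB : D ≠ B := by rintro rfl; exact hD hB1
            have hD2 : Y₂.boxCount D = 0 := by
              have := hcnt D; rw [boxCount_prod'] at this; omega
            have hDP : D ≠ P := by
              rintro rfl
              exact hP2 hD2
            refine hoth D (by rw [boxCount_prod']; omega) hDB hDP ?_
            intro m hm hb
            obtain ⟨m', hm'⟩ := Option.isSome_iff_exists.mp ((ctx_isSome_iff Y₁ D).mpr hD)
            rw [boxCtx_prod, hm'] at hm
            simp only [Option.orElse] at hm
            injection hm with hmm
            subst hmm
            exact (count_ne_of_mem_ctx hm' hb) hB1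
          show ACE (prod ((deco F Y₁).exp B fr) ((deco F Y₂).exp B fr)) _
          rw [hnone1]
          exact ACE.prod_congr (.refl _) hace2

end Pretensor

namespace Pretensor

theorem mem_first_split {α : Type _} {a : α} :
    ∀ {l : List α}, a ∈ l → ∃ s t, l = s ++ a :: t ∧ a ∉ s := by
  intro l
  induction l with
  | nil => simp
  | cons x xs ih =>
      intro h
      by_cases hx : a = x
      · subst hx; exact ⟨[], xs, rfl, by simp⟩
      · rcases ih (by
          rcases List.mem_cons.mp h with h | h
          · exact absurd h hx
          · exact h) with ⟨s, t, rfl, hs⟩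
        refine ⟨x :: s, t, rfl, ?_⟩
        intro hc
        rcases List.mem_cons.mp hc with hc | hc
        · exact hx hc
        · exact hs hc

end Pretensor

open Pretensor in
/-- The invariant carried through an instantiation: the weakened states are, up to
AC-equivalence, a common decoration of the plain states, whose box structures agree. -/
structure WInv {σ : Type} (SG SH XG XH T : Pretensor σ) (F : BoxName → Pretensor σ) : Prop where
  aceG : ACE SG (Pretensor.prod T (deco F XG))
  aceH : ACE SH (Pretensor.prod T (deco F XH))
  ctxEq : ∀ D, XG.boxCtx D = XH.boxCtx D
  cntG : ∀ D, XG.boxCount D ≤ 1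
  cntH : ∀ D, XH.boxCount D ≤ 1

open Pretensor in
theorem winv_step {σ : Type} {SG SH XG XH T : Pretensor σ} {F : BoxName → Pretensor σ}
    (op : BOp) (hek : op.isExpKill) (inv : WInv SG SH XG XH T F) (hok : op.OK SG) :
    ∃ T' F', WInv (op.app SG) (op.app SH) (op.app XG) (op.app XH) T' F' ∧ op.OK XG := by
  classical
  cases op with
  | copy A fr => exact hek.elim
  | drop A => exact hek.elim
  | kill B =>
      refine ⟨T.kill B, fun D => (F D).kill B, ⟨?_, ?_, ?_, ?_, ?_⟩, trivial⟩
      · exact (ACE.kill_congr B inv.aceG).trans (by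
          show ACE (prod (T.kill B) ((deco F XG).kill B)) _
          rw [kill_deco]
          exact .refl _)
      · exact (ACE.kill_congr B inv.aceH).trans (by
          show ACE (prod (T.kill B) ((deco F XH).kill B)) _
          rw [kill_deco]
          exact .refl _)
      · intro D
        show (XG.kill B).boxCtx D = (XH.kill B).boxCtx D
        rw [boxCtx_kill inv.cntG D, boxCtx_kill inv.cntH D, inv.ctxEq D]
      · intro D
        exact (boxCount_kill_le B D XG).trans (inv.cntG D)
      · intro D
        exact (boxCount_kill_le B D XH).trans (inv.cntH D)
  | exp B fr =>
      have hok' : fr.IsFreshFor SG := hok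
      have hXGnames : XG.boxNames ⊆ SG.boxNames := by
        rw [inv.aceG.boxNames_eq]
        exact (boxNames_deco_sub F XG).trans Set.subset_union_right
      have hXGedge : XG.edgeNames ⊆ SG.edgeNames := by
        rw [inv.aceG.edgeNames_eq]
        exact (edgeNames_deco_sub F XG).trans Set.subset_union_right
      have hokXG : fr.IsFreshFor XG :=
        ⟨fun a ha hc => hok'.1 a (hXGedge ha) (hXGedge hc),
         fun A hA hc => hok'.2 A (hXGnames hA) (hXGnames hc)⟩
      have hcntEq : ∀ D, (XG.boxCount D ≠ 0 ↔ XH.boxCount D ≠ 0) := fun D => by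
        rw [← ctx_isSome_iff, ← ctx_isSome_iff, inv.ctxEq D]
      have hfresh : ∀ δ, XG.boxCount δ ≠ 0 → fr.bm δ ∉ SG.boxNames := fun δ h =>
        hok'.2 δ (hXGnames (mem_boxNames_of_count h))
      have hfrG : ∀ δ, XG.boxCount δ ≠ 0 → XG.boxCount (fr.bm δ) = 0 := fun δ h => by
        by_contra hc
        exact hfresh δ h (hXGnames (mem_boxNames_of_count (by omega)))
      have hfrH : ∀ δ, XH.boxCount δ ≠ 0 → XH.boxCount (fr.bm δ) = 0 := fun δ h => by
        by_contra hc
        exact hfresh δ ((hcntEq δ).mpr h)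
          (hXGnames (mem_boxNames_of_count ((hcntEq _).mpr (by omega))))
      show ∃ T' F', WInv (SG.exp B fr) (SH.exp B fr) (XG.exp B fr) (XH.exp B fr) T' F'
        ∧ fr.IsFreshFor XG
      cases hB : XG.boxCtx B with
      | none =>
          have hBG0 : XG.boxCount B = 0 := by
            by_contra hc
            have := (ctx_isSome_iff XG B).mpr hc
            rw [hB] at this
            simp at this
          have hBH0 : XH.boxCount B = 0 := by
            by_contra hc
            exact ((hcntEq B).mpr hc) hBG0
          refine ⟨T.exp B fr, fun D => (F D).exp B fr, ⟨?_, ?_, ?_, ?_, ?_⟩, hokXG⟩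
          · exact (ACE.exp_congr B fr inv.aceG).trans (by
              show ACE (prod (T.exp B fr) ((deco F XG).exp B fr)) _
              rw [exp_deco_none hBG0 (fun D _ => rfl)]
              exact .refl _)
          · exact (ACE.exp_congr B fr inv.aceH).trans (by
              show ACE (prod (T.exp B fr) ((deco F XH).exp B fr)) _
              rw [exp_deco_none hBH0 (fun D _ => rfl)]
              exact .refl _)
          · intro D
            show (XG.exp B fr).boxCtx D = (XH.exp B fr).boxCtx D
            rw [boxCtx_exp_noB hBG0 D, boxCtx_exp_noB hBH0 D]
            exact inv.ctxEq D
          · intro D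
            show (XG.exp B fr).boxCount D ≤ 1
            rw [boxCount_exp, cntIn_zero hBG0]
            have := inv.cntG D
            omega
          · intro D
            show (XH.exp B fr).boxCount D ≤ 1
            rw [boxCount_exp, cntIn_zero hBH0]
            have := inv.cntH D
            omega
      | some l =>
          have hBG : XG.boxCount B ≠ 0 := count_ne_of_ctx hB
          have hBH : XH.boxCount B ≠ 0 := (hcntEq B).mp hBG
          have hctxEq' : ∀ D, (XG.exp B fr).boxCtx D = (XH.exp B fr).boxCtx D := by
            intro D
            by_cases hD : XG.boxCount D ≠ 0
            · rw [boxCtx_exp_old inv.cntG hfrG hD,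
                boxCtx_exp_old inv.cntH hfrH ((hcntEq D).mp hD)]
              exact inv.ctxEq D
            · push_neg at hD
              by_cases him : ∃ m, XG.boxCtx (fr.bm.symm D) = some m ∧ B ∈ m
              · obtain ⟨m, hm, hb⟩ := him
                obtain ⟨m₁, m₂, rfl, hB1⟩ := mem_first_split hb
                have e1 := boxCtx_exp_new (B := B) (fr := fr) inv.cntG hfrG hm hB1
                have e2 := boxCtx_exp_new (B := B) (fr := fr) inv.cntH hfrH
                  (((inv.ctxEq _).symm.trans hm)) hB1
                rw [Equiv.apply_symm_apply] at e1 e2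
                rw [e1, e2]
              · have c1 : cntIn B (fr.bm.symm D) XG = 0 := by
                  by_contra hc
                  exact him (cntIn_pos_ctx inv.cntG hc)
                have c2 : cntIn B (fr.bm.symm D) XH = 0 := by
                  by_contra hc
                  obtain ⟨m, hm, hb⟩ := cntIn_pos_ctx inv.cntH hc
                  exact him ⟨m, (inv.ctxEq _).trans hm, hb⟩
                have hDH : XH.boxCount D = 0 := by
                  by_contra hc
                  exact ((hcntEq D).mpr hc) hD
                rw [ctx_none_of_count (by rw [boxCount_exp, hD, c1]),
                  ctx_none_of_count (by rw [boxCount_exp, hDH, c2])]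
          have hcntG' : ∀ D, (XG.exp B fr).boxCount D ≤ 1 := by
            intro D
            rw [boxCount_exp]
            by_cases hD : XG.boxCount D = 0
            · have h1 := cntIn_le B (fr.bm.symm D) XG
              have h2 := inv.cntG (fr.bm.symm D)
              omega
            · have hci : cntIn B (fr.bm.symm D) XG = 0 := by
                by_contra hc
                obtain ⟨m, hm, hb⟩ := cntIn_pos_ctx inv.cntG hc
                have h1 := hfrG (fr.bm.symm D) (count_ne_of_ctx hm)
                rw [Equiv.apply_symm_apply] at h1
                exact hD h1
              have := inv.cntG D
              omega
          have hcntH' : ∀ D, (XH.exp B fr).boxCount D ≤ 1 := by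
            intro D
            rw [boxCount_exp]
            by_cases hD : XH.boxCount D = 0
            · have h1 := cntIn_le B (fr.bm.symm D) XH
              have h2 := inv.cntH (fr.bm.symm D)
              omega
            · have hci : cntIn B (fr.bm.symm D) XH = 0 := by
                by_contra hc
                obtain ⟨m, hm, hb⟩ := cntIn_pos_ctx inv.cntH hc
                have h1 := hfrH (fr.bm.symm D) (count_ne_of_ctx hm)
                rw [Equiv.apply_symm_apply] at h1
                exact hD h1
              have := inv.cntH D
              omega
          set F' : BoxName → Pretensor σ := fun D =>
            if D = B then F B
            else if ∃ m', XG.boxCtx B = some (D :: m') then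
              prod ((F D).exp B fr) ((F B).rename fr.em fr.bm)
            else if ∃ m, XG.boxCtx (fr.bm.symm D) = some m ∧ B ∈ m then
              (F (fr.bm.symm D)).rename fr.em fr.bm
            else if ∃ m, XG.boxCtx D = some m ∧ B ∈ m then F D
            else (F D).exp B fr
            with hF'def
          have hFB' : F' B = F B := by
            simp [hF'def]
          have himg' : ∀ D m, XG.boxCtx D = some m → B ∈ m →
              F' (fr.bm D) = (F D).rename fr.em fr.bm := by
            intro D m hm hb
            have hDcnt := count_ne_of_ctx hm
            have hfrD := hfresh D hDcnt
            have hne1 : ¬ fr.bm D = B := by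
              intro he
              apply hfrD
              rw [he]
              exact hXGnames (mem_boxNames_of_count hBG)
            have hne2 : ¬ ∃ m', XG.boxCtx B = some (fr.bm D :: m') := by
              rintro ⟨m', hm'⟩
              exact hfrD (hXGnames (mem_boxNames_of_count
                (count_ne_of_mem_ctx hm' (by simp))))
            have hpos : ∃ m₀, XG.boxCtx (fr.bm.symm (fr.bm D)) = some m₀ ∧ B ∈ m₀ := by
              rw [Equiv.symm_apply_apply]
              exact ⟨m, hm, hb⟩
            simp only [hF'def]
            rw [if_neg hne1, if_neg hne2, if_pos hpos, Equiv.symm_apply_apply]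
          have hund' : ∀ D m, XG.boxCtx D = some m → B ∈ m → F' D = F D := by
            intro D m hm hb
            have hDcnt := count_ne_of_ctx hm
            have hDB : ¬ D = B := by
              rintro rfl
              exact notMem_ctx_self inv.cntG hm hb
            have hne2 : ¬ ∃ m', XG.boxCtx B = some (D :: m') := by
              rintro ⟨m', hm'⟩
              have hstep := ctx_step inv.cntG hm'
              rw [hm] at hstep
              injection hstep with hstep
              apply notMem_ctx_self inv.cntG hm'
              rw [hstep] at hb
              exact List.mem_cons_of_mem D hb
            have hne3 : ¬ ∃ m₀, XG.boxCtx (fr.bm.symm D) = some m₀ ∧ B ∈ m₀ := by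
              rintro ⟨m₀, hm₀, hb₀⟩
              refine hfresh (fr.bm.symm D) (count_ne_of_ctx hm₀) ?_
              rw [Equiv.apply_symm_apply]
              exact hXGnames (mem_boxNames_of_count hDcnt)
            simp only [hF'def]
            rw [if_neg hDB, if_neg hne2, if_neg hne3, if_pos ⟨m, hm, hb⟩]
          have hoth' : ∀ D, XG.boxCount D ≠ 0 → D ≠ B →
              (∀ m', XG.boxCtx B ≠ some (D :: m')) →
              (∀ m, XG.boxCtx D = some m → B ∉ m) → F' D = (F D).exp B fr := by
            intro D hDcnt hDB hnp hnu
            have hne2 : ¬ ∃ m', XG.boxCtx B = some (D :: m') := by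
              rintro ⟨m', hm'⟩
              exact hnp m' hm'
            have hne3 : ¬ ∃ m₀, XG.boxCtx (fr.bm.symm D) = some m₀ ∧ B ∈ m₀ := by
              rintro ⟨m₀, hm₀, hb₀⟩
              refine hfresh (fr.bm.symm D) (count_ne_of_ctx hm₀) ?_
              rw [Equiv.apply_symm_apply]
              exact hXGnames (mem_boxNames_of_count hDcnt)
            have hne4 : ¬ ∃ m, XG.boxCtx D = some m ∧ B ∈ m := by
              rintro ⟨m, hm, hb⟩
              exact hnu m hm hb
            simp only [hF'def]
            rw [if_neg hDB, if_neg hne2, if_neg hne3, if_neg hne4]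
          cases l with
          | nil =>
              have hnpar : ∀ D m', XG.boxCtx B ≠ some (D :: m') := by
                intro D m' hm'
                rw [hB] at hm'
                injection hm' with hm'
                simp at hm'
              have htopG := exp_deco_top XG hB inv.cntG hFB' himg' hund'
                (fun D hD hDB hnu => hoth' D hD hDB (hnpar D) hnu)
              have htopH := exp_deco_top XH ((inv.ctxEq B).symm.trans hB) inv.cntH hFB'
                (fun D m hm hb => himg' D m ((inv.ctxEq D).trans hm) hb)
                (fun D m hm hb => hund' D m ((inv.ctxEq D).trans hm) hb)
                (fun D hD hDB hnu => hoth' D ((hcntEq D).mpr hD) hDB (hnpar D)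
                  (fun m hm => hnu m ((inv.ctxEq D).symm.trans hm)))
              refine ⟨prod (T.exp B fr) ((F B).rename fr.em fr.bm), F',
                ⟨?_, ?_, hctxEq', hcntG', hcntH'⟩, hokXG⟩
              · exact (ACE.exp_congr B fr inv.aceG).trans (by
                  show ACE (prod (T.exp B fr) ((deco F XG).exp B fr)) _
                  exact (ACE.prod_congr (.refl _) htopG).trans
                    ((ACE.rot2 (T.exp B fr) (deco F' (XG.exp B fr))
                      ((F B).rename fr.em fr.bm)).symm))
              · exact (ACE.exp_congr B fr inv.aceH).trans (by
                  show ACE (prod (T.exp B fr) ((deco F XH).exp B fr)) _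
                  exact (ACE.prod_congr (.refl _) htopH).trans
                    ((ACE.rot2 (T.exp B fr) (deco F' (XH.exp B fr))
                      ((F B).rename fr.em fr.bm)).symm))
          | cons P mt =>
              have hpar' : F' P = prod ((F P).exp B fr) ((F B).rename fr.em fr.bm) := by
                have hPB : ¬ P = B := by
                  rintro rfl
                  exact notMem_ctx_self inv.cntG hB (by simp)
                simp only [hF'def]
                rw [if_neg hPB, if_pos ⟨mt, hB⟩]
              have hdeepG := exp_deco_deep XG mt hB inv.cntG hFB' hpar' himg' hund'
                (fun D hD hDB hDP hnu => hoth' D hD hDB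
                  (fun m' hm' => by
                    rw [hB] at hm'
                    injection hm' with hm'
                    injection hm' with h1 h2
                    exact hDP h1.symm)
                  hnu)
              have hdeepH := exp_deco_deep XH mt ((inv.ctxEq B).symm.trans hB) inv.cntH
                hFB' hpar'
                (fun D m hm hb => himg' D m ((inv.ctxEq D).trans hm) hb)
                (fun D m hm hb => hund' D m ((inv.ctxEq D).trans hm) hb)
                (fun D hD hDB hDP hnu => hoth' D ((hcntEq D).mpr hD) hDB
                  (fun m' hm' => by
                    rw [hB] at hm'
                    injection hm' with hm'
                    injection hm' with h1 h2
                    exact hDP h1.symm)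
                  (fun m hm => hnu m ((inv.ctxEq D).symm.trans hm)))
              refine ⟨T.exp B fr, F', ⟨?_, ?_, hctxEq', hcntG', hcntH'⟩, hokXG⟩
              · exact (ACE.exp_congr B fr inv.aceG).trans (by
                  show ACE (prod (T.exp B fr) ((deco F XG).exp B fr)) _
                  exact ACE.prod_congr (.refl _) hdeepG)
              · exact (ACE.exp_congr B fr inv.aceH).trans (by
                  show ACE (prod (T.exp B fr) ((deco F XH).exp B fr)) _
                  exact ACE.prod_congr (.refl _) hdeepH)

namespace Pretensor

variable {σ : Type}

theorem boxCount_deco_le (F : BoxName → Pretensor σ) (X : Pretensor σ) (D : BoxName) :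
    X.boxCount D ≤ (deco F X).boxCount D := by
  induction X with
  | unit => exact le_rfl
  | idt a b => exact le_rfl
  | gen φ e => exact le_rfl
  | box C E ih =>
      show (box C E).boxCount D ≤ (box (prod (deco F C) (F E)) E).boxCount D
      rw [boxCount_box', boxCount_box', boxCount_prod']
      omega
  | prod X Y ih1 ih2 =>
      show (prod X Y).boxCount D ≤ (prod (deco F X) (deco F Y)).boxCount D
      rw [boxCount_prod', boxCount_prod']
      omega

theorem ctx_eq_of_compat {G H : Pretensor σ}
    (hcntG : ∀ D, G.boxCount D ≤ 1) (hcntH : ∀ D, H.boxCount D ≤ 1)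
    (hocc : ∀ D, G.boxCount D ≠ 0 ↔ H.boxCount D ≠ 0)
    (hPrec : ∀ A B, G.Prec A B ↔ H.Prec A B) :
    ∀ D, G.boxCtx D = H.boxCtx D := by
  have aux : ∀ m : List BoxName, ∀ D, G.boxCtx D = some m → H.boxCtx D = some m := by
    intro m
    induction m with
    | nil =>
        intro D hD
        obtain ⟨l', hl'⟩ := Option.isSome_iff_exists.mp
          ((ctx_isSome_iff H D).mpr ((hocc D).mp (count_ne_of_ctx hD)))
        cases l' with
        | nil => exact hl'
        | cons E m' =>
            exfalso
            obtain ⟨m'', hm''⟩ := (hPrec D E).mpr ⟨m', hl'⟩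
            rw [hD] at hm''
            injection hm'' with hm''
            simp at hm''
    | cons E m ih =>
        intro D hD
        obtain ⟨m', hm'⟩ := (hPrec D E).mp ⟨m, hD⟩
        have h1 := ctx_step hcntG hD
        have h2 := ih E h1
        have h3 := ctx_step hcntH hm'
        rw [h2] at h3
        injection h3 with h3
        rw [hm', h3]
  intro D
  cases hGd : G.boxCtx D with
  | some m => rw [aux m D hGd]
  | none =>
      cases hHd : H.boxCtx D with
      | none => rfl
      | some m =>
          exfalso
          have hc : G.boxCount D ≠ 0 := (hocc D).mpr (count_ne_of_ctx hHd)
          have := (ctx_isSome_iff G D).mpr hc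
          rw [hGd] at this
          simp at this

end Pretensor

open Pretensor in
theorem winv_ops {σ : Type} : ∀ (i : List BOp) {SG SH XG XH T : Pretensor σ}
    {F : BoxName → Pretensor σ},
    (∀ op ∈ i, op.isExpKill) → WInv SG SH XG XH T F → OpsOK i SG →
    ∃ T' F', WInv (applyOps i SG) (applyOps i SH) (applyOps i XG) (applyOps i XH) T' F'
      ∧ OpsOK i XG := by
  intro i
  induction i with
  | nil =>
      intro SG SH XG XH T F _ inv _
      exact ⟨T, F, inv, trivial⟩
  | cons op rest ih =>
      intro SG SH XG XH T F hek inv hok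
      obtain ⟨hok1, hok2⟩ := hok
      obtain ⟨T', F', inv', hokXG⟩ := winv_step op (hek op (by simp)) inv hok1
      obtain ⟨T'', F'', inv'', hoks⟩ :=
        ih (fun op' h => hek op' (by simp [h])) inv' hok2
      exact ⟨T'', F'', inv'', hokXG, hoks⟩

open Pretensor
/-- The rule (Weaken) is sound with respect to the
concrete-instance semantics: for any !-tensor equation `G = H`, !-box `A` and
!-tensor expression `K` such that `Wk_A^K(G)` and `Wk_A^K(H)` are well-formed,
every concrete instance of the equation `Wk_A^K(G) = Wk_A^K(H)` is derivable
from the set `⟦G = H⟧` of concrete instances of `G = H` using only the concrete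
product rule and `≡`. -/
theorem weaken_sound {σ : Type} (G H K : Pretensor σ) (A : BoxName)
    (hG : Pretensor.IsTensorExpr G) (hH : Pretensor.IsTensorExpr H)
    (hcmp : Compatible G H)
    (hwkG : Pretensor.IsTensorExpr (Pretensor.wk A K G))
    (hwkH : Pretensor.IsTensorExpr (Pretensor.wk A K H)) :
    ∀ i : List BOp, IsInst i (Pretensor.wk A K G) →
      Deriv (ConcInst G H)
        (applyOps i (Pretensor.wk A K G)) (applyOps i (Pretensor.wk A K H)) := by
  intro i hi
  obtain ⟨hek, hok, hconc⟩ := hi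
  by_cases hA : G.boxCount A = 0
  · have hAH : H.boxCount A = 0 := by
      by_contra hc
      exact ((hcmp.2.1 A).mpr hc) hA
    rw [wk_eq_self hA] at hok hconc ⊢
    rw [wk_eq_self hAH]
    exact Deriv.base ⟨i, ⟨hek, hok, hconc⟩, rfl⟩
  · have hctx0 : ∀ D, G.boxCtx D = H.boxCtx D :=
      ctx_eq_of_compat hG.2.1 hH.2.1 hcmp.2.1 hcmp.2.2.1
    have invinit : WInv (Pretensor.wk A K G) (Pretensor.wk A K H) G H Pretensor.unit
        (fun D => if D = A then K else Pretensor.unit) := by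
      refine ⟨?_, ?_, hctx0, hG.2.1, hH.2.1⟩
      · exact (wk_ace_deco (hG.2.1 A)).trans ((ACE.unit_left _).symm)
      · exact (wk_ace_deco (hH.2.1 A)).trans ((ACE.unit_left _).symm)
    obtain ⟨T', F', inv', hokG⟩ := winv_ops i hek invinit hok
    have hconc' : (Pretensor.prod T' (deco F' (applyOps i G))).IsConcrete :=
      (inv'.aceG.isConcrete_iff).mp hconc
    have hXGC : (deco F' (applyOps i G)).IsConcrete := hconc'.2
    have hXGcnt : ∀ D, (applyOps i G).boxCount D = 0 := by
      intro D
      have h1 := isConcrete_noBox hXGC D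
      have h2 := boxCount_deco_le F' (applyOps i G) D
      omega
    have hdecoG : deco F' (applyOps i G) = applyOps i G := deco_noBox hXGcnt
    have hXHcnt : ∀ D, (applyOps i H).boxCount D = 0 := by
      intro D
      by_contra hc
      have hc' : (applyOps i G).boxCount D ≠ 0 := by
        rw [← ctx_isSome_iff, inv'.ctxEq D, ctx_isSome_iff]
        exact hc
      exact hc' (hXGcnt D)
    have hdecoH : deco F' (applyOps i H) = applyOps i H := deco_noBox hXHcnt
    have hinstG : IsInst i G := ⟨hek, hokG, by rw [hdecoG] at hXGC; exact hXGC⟩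
    refine Deriv.equivCl ?_ ?_ (Deriv.prodRule T' (Deriv.base ⟨i, hinstG, rfl⟩))
    · have h := inv'.aceG
      rw [hdecoG] at h
      exact h.toEquiv
    · have h := inv'.aceH
      rw [hdecoH] at h
      exact h.toEquiv

end BangTensor
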